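/- arXiv:2510.05714 — 5 statements merged into one kernel-verified Lean document; each statement's English description precedes it below -/
import Mathlib

section
/- Let p ∈ (1,∞) with conjugate exponent q = p/(p−1), let α ≥ 0, and let A : Ω → ℂ^{d×d} be measurable and essentially bounded with Δ_p(A − α·(pq/4)·I_d) > 0. Then for every r ∈ (1,∞) with |1/2 − 1/r| ≤ |1/2 − 1/p|, writing r' = r/(r−1), one has Δ_r(A − α·(r r'/4)·I_d) > 0 (and in particular Δ_r(A) > 0). -/
open MeasureTheory

/-- Squared Euclidean norm of a complex vector. -/
noncomputable def enorm2 {d : ℕ} (ξ : Fin d → ℂ) : ℝ := ∑ j, Complex.normSq (ξ j)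

/-- The quantity `Re⟨Mξ, ξ + |1 - 2/p| ξ̄⟩`, where `⟨z,w⟩ = ∑ⱼ zⱼ conj(wⱼ)`. -/
noncomputable def deltaForm {d : ℕ} (p : ℝ) (M : Matrix (Fin d) (Fin d) ℂ)
    (ξ : Fin d → ℂ) : ℝ :=
  (∑ j, M.mulVec ξ j *
    (starRingEnd ℂ) (ξ j + Complex.ofReal |1 - 2 / p| * (starRingEnd ℂ) (ξ j))).re

/-- `Δ_p(A) = essinf_{x ∈ Ω} min_{|ξ| = 1} Re⟨A(x)ξ, ξ + |1 - 2/p| ξ̄⟩`. -/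
noncomputable def deltaP {d : ℕ} (Ω : Set (EuclideanSpace ℝ (Fin d))) (p : ℝ)
    (A : EuclideanSpace ℝ (Fin d) → Matrix (Fin d) (Fin d) ℂ) : ℝ :=
  essInf (fun x => sInf (deltaForm p (A x) '' {ξ : Fin d → ℂ | enorm2 ξ = 1}))
    (volume.restrict Ω)

noncomputable def aF {d : ℕ} (M : Matrix (Fin d) (Fin d) ℂ) (ξ : Fin d → ℂ) : ℝ :=
  (∑ j, M.mulVec ξ j * (starRingEnd ℂ) (ξ j)).re

noncomputable def wF {d : ℕ} (M : Matrix (Fin d) (Fin d) ℂ) (ξ : Fin d → ℂ) : ℂ :=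
  ∑ j, M.mulVec ξ j * ξ j

noncomputable def sF {d : ℕ} (ξ : Fin d → ℂ) : ℂ := ∑ j, ξ j * ξ j

lemma deltaForm_eq {d : ℕ} (p : ℝ) (M : Matrix (Fin d) (Fin d) ℂ) (ξ : Fin d → ℂ) :
    deltaForm p M ξ = aF M ξ + |1 - 2 / p| * (wF M ξ).re := by
  unfold deltaForm aF wF
  simp only [map_add, map_mul, Complex.conj_conj, Complex.conj_ofReal, mul_add,
    Finset.sum_add_distrib, Complex.add_re]
  congr 1
  have : ∀ j, M.mulVec ξ j * ((|1 - 2/p| : ℝ) * ξ j)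
      = (|1 - 2/p| : ℝ) * (M.mulVec ξ j * ξ j) := fun j => by ring
  simp only [this, ← Finset.mul_sum, Complex.re_ofReal_mul]

lemma mulVec_sub_smul_one {d : ℕ} (B : Matrix (Fin d) (Fin d) ℂ) (g : ℝ) (ξ : Fin d → ℂ) (j : Fin d) :
    (B - ((g : ℂ) • (1 : Matrix (Fin d) (Fin d) ℂ))).mulVec ξ j = B.mulVec ξ j - (g : ℂ) * ξ j := by
  rw [Matrix.sub_mulVec, Matrix.smul_mulVec, Matrix.one_mulVec]
  simp [Pi.smul_apply, smul_eq_mul]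

lemma aF_sub {d : ℕ} (B : Matrix (Fin d) (Fin d) ℂ) (g : ℝ) (ξ : Fin d → ℂ) :
    aF (B - ((g : ℂ) • 1)) ξ = aF B ξ - g * enorm2 ξ := by
  unfold aF enorm2
  simp only [mulVec_sub_smul_one, sub_mul, Finset.sum_sub_distrib, Complex.sub_re]
  congr 1
  have : ∀ j, (g : ℂ) * ξ j * (starRingEnd ℂ) (ξ j) = (g : ℂ) * ((Complex.normSq (ξ j) : ℝ) : ℂ) := by
    intro j; rw [mul_assoc, Complex.mul_conj]
  simp only [this, ← Finset.mul_sum, Complex.re_ofReal_mul]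
  congr 1
  rw [← Complex.ofReal_sum]
  simp

lemma wF_sub {d : ℕ} (B : Matrix (Fin d) (Fin d) ℂ) (g : ℝ) (ξ : Fin d → ℂ) :
    wF (B - ((g : ℂ) • 1)) ξ = wF B ξ - (g : ℂ) * sF ξ := by
  unfold wF sF
  simp only [mulVec_sub_smul_one, sub_mul, Finset.sum_sub_distrib, Finset.mul_sum, mul_assoc]

lemma deltaForm_sub {d : ℕ} (p : ℝ) (B : Matrix (Fin d) (Fin d) ℂ) (g : ℝ) (ξ : Fin d → ℂ) :
    deltaForm p (B - ((g : ℂ) • 1)) ξ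
      = aF B ξ - g * enorm2 ξ + |1 - 2 / p| * (wF B ξ - (g : ℂ) * sF ξ).re := by
  rw [deltaForm_eq, aF_sub, wF_sub]

lemma enorm2_smul {d : ℕ} (v : ℂ) (ξ : Fin d → ℂ) :
    enorm2 (v • ξ) = Complex.normSq v * enorm2 ξ := by
  unfold enorm2
  simp only [Pi.smul_apply, smul_eq_mul, Complex.normSq_mul, Finset.mul_sum]

lemma aF_smul {d : ℕ} (M : Matrix (Fin d) (Fin d) ℂ) (v : ℂ) (ξ : Fin d → ℂ) :
    aF M (v • ξ) = Complex.normSq v * aF M ξ := by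
  unfold aF
  rw [Matrix.mulVec_smul]
  have : ∀ j, (v • M.mulVec ξ) j * (starRingEnd ℂ) ((v • ξ) j)
      = ((Complex.normSq v : ℝ) : ℂ) * (M.mulVec ξ j * (starRingEnd ℂ) (ξ j)) := by
    intro j
    simp only [Pi.smul_apply, smul_eq_mul, map_mul]
    rw [← Complex.mul_conj]
    ring
  simp only [this, ← Finset.mul_sum, Complex.re_ofReal_mul]

lemma wF_smul {d : ℕ} (M : Matrix (Fin d) (Fin d) ℂ) (v : ℂ) (ξ : Fin d → ℂ) :
    wF M (v • ξ) = v ^ 2 * wF M ξ := by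
  unfold wF
  rw [Matrix.mulVec_smul]
  simp only [Pi.smul_apply, smul_eq_mul, Finset.mul_sum]
  exact Finset.sum_congr rfl fun j _ => by ring

lemma sF_smul {d : ℕ} (v : ℂ) (ξ : Fin d → ℂ) : sF (v • ξ) = v ^ 2 * sF ξ := by
  unfold sF
  simp only [Pi.smul_apply, smul_eq_mul, Finset.mul_sum]
  exact Finset.sum_congr rfl fun j _ => by ring

lemma exists_rot (W : ℂ) : ∃ v : ℂ, ‖v‖ = 1 ∧ v ^ 2 * W = -((‖W‖ : ℝ) : ℂ) := by
  by_cases hW : W = 0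
  · exact ⟨1, by simp [hW]⟩
  · refine ⟨Complex.I * Complex.exp (((-(Complex.arg W / 2) : ℝ) : ℂ) * Complex.I), ?_, ?_⟩
    · rw [norm_mul, Complex.norm_I, Complex.norm_exp_ofReal_mul_I, one_mul]
    · have hsq : (Complex.I * Complex.exp (((-(Complex.arg W / 2) : ℝ) : ℂ) * Complex.I)) ^ 2
          = -Complex.exp (((-(Complex.arg W) : ℝ) : ℂ) * Complex.I) := by
        rw [mul_pow, Complex.I_sq, sq, ← Complex.exp_add]
        push_cast
        ring_nf
      rw [hsq]
      nth_rewrite 2 [← Complex.norm_mul_exp_arg_mul_I W]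
      have h1 : Complex.exp (((-W.arg : ℝ) : ℂ) * Complex.I)
          * Complex.exp (((W.arg : ℝ) : ℂ) * Complex.I) = 1 := by
        rw [← Complex.exp_add]
        push_cast
        ring_nf
        exact Complex.exp_zero
      calc -Complex.exp (((-W.arg : ℝ) : ℂ) * Complex.I)
            * (((‖W‖ : ℝ) : ℂ) * Complex.exp (((W.arg : ℝ) : ℂ) * Complex.I))
          = -(((‖W‖ : ℝ) : ℂ) * (Complex.exp (((-W.arg : ℝ) : ℂ) * Complex.I)
            * Complex.exp (((W.arg : ℝ) : ℂ) * Complex.I))) := by ring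
        _ = -((‖W‖ : ℝ) : ℂ) := by rw [h1, mul_one]

lemma abs_apply_le {d : ℕ} {ξ : Fin d → ℂ} (hξ : enorm2 ξ = 1) (j : Fin d) :
    ‖ξ j‖ ≤ 1 := by
  have h1 : Complex.normSq (ξ j) ≤ 1 := by
    rw [← hξ]
    exact Finset.single_le_sum (f := fun j => Complex.normSq (ξ j))
      (fun i _ => Complex.normSq_nonneg _) (Finset.mem_univ j)
  have := Complex.sq_norm (ξ j)
  nlinarith [norm_nonneg (ξ j)]

lemma abs_sF_le {d : ℕ} {ξ : Fin d → ℂ} (hξ : enorm2 ξ = 1) : ‖sF ξ‖ ≤ 1 := by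
  unfold sF
  calc ‖∑ j, ξ j * ξ j‖ ≤ ∑ j, ‖ξ j * ξ j‖ :=
        norm_sum_le _ _
    _ = ∑ j, Complex.normSq (ξ j) := by
        refine Finset.sum_congr rfl fun j _ => ?_
        rw [norm_mul, ← Complex.sq_norm, sq]
    _ = 1 := hξ

lemma deltaForm_bound {d : ℕ} {p : ℝ} (hc : |1 - 2 / p| ≤ 1) (M : Matrix (Fin d) (Fin d) ℂ)
    {ξ : Fin d → ℂ} (hξ : enorm2 ξ = 1) :
    |deltaForm p M ξ| ≤ 2 * ∑ j, ∑ k, ‖M j k‖ := by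
  unfold deltaForm
  set c := |1 - 2 / p| with hcdef
  have hc0 : 0 ≤ c := abs_nonneg _
  calc |(∑ j, M.mulVec ξ j * (starRingEnd ℂ) (ξ j + (c : ℂ) * (starRingEnd ℂ) (ξ j))).re|
      ≤ ‖∑ j, M.mulVec ξ j * (starRingEnd ℂ) (ξ j + (c : ℂ) * (starRingEnd ℂ) (ξ j))‖ :=
        Complex.abs_re_le_norm _
    _ ≤ ∑ j, ‖M.mulVec ξ j * (starRingEnd ℂ) (ξ j + (c : ℂ) * (starRingEnd ℂ) (ξ j))‖ :=
        norm_sum_le _ _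
    _ ≤ ∑ j, (∑ k, ‖M j k‖) * 2 := by
        refine Finset.sum_le_sum fun j _ => ?_
        rw [norm_mul]
        have h1 : ‖M.mulVec ξ j‖ ≤ ∑ k, ‖M j k‖ := by
          unfold Matrix.mulVec dotProduct
          calc ‖∑ k, M j k * ξ k‖ ≤ ∑ k, ‖M j k * ξ k‖ :=
                norm_sum_le _ _
            _ ≤ ∑ k, ‖M j k‖ := by
                refine Finset.sum_le_sum fun k _ => ?_
                rw [norm_mul]
                nlinarith [abs_apply_le hξ k, norm_nonneg (M j k), norm_nonneg (ξ k)]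
        have h2 : ‖(starRingEnd ℂ) (ξ j + (c : ℂ) * (starRingEnd ℂ) (ξ j))‖ ≤ 2 := by
          rw [Complex.norm_conj]
          calc ‖ξ j + (c : ℂ) * (starRingEnd ℂ) (ξ j)‖
              ≤ ‖ξ j‖ + ‖(c : ℂ) * (starRingEnd ℂ) (ξ j)‖ := norm_add_le _ _
            _ ≤ 2 := by
                rw [norm_mul, Complex.norm_real, Real.norm_eq_abs, Complex.norm_conj, abs_of_nonneg hc0]
                nlinarith [abs_apply_le hξ j, norm_nonneg (ξ j)]
        exact mul_le_mul h1 h2 (norm_nonneg _)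
          (Finset.sum_nonneg fun k _ => norm_nonneg _)
    _ = 2 * ∑ j, ∑ k, ‖M j k‖ := by rw [← Finset.sum_mul, mul_comm]

lemma exists_unit {d : ℕ} (hd : 1 ≤ d) : ∃ ξ : Fin d → ℂ, enorm2 ξ = 1 := by
  refine ⟨fun j => if j = ⟨0, hd⟩ then 1 else 0, ?_⟩
  unfold enorm2
  rw [Finset.sum_eq_single (⟨0, hd⟩ : Fin d)]
  · simp
  · intro b _ hb; simp [hb]
  · simp

lemma abs_one_lt {p : ℝ} (hp : 1 < p) : |1 - 2 / p| < 1 := by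
  have h0 : 0 < p := by linarith
  rw [abs_lt]
  constructor
  · have : 2 / p < 2 := by rw [div_lt_iff₀ h0]; nlinarith
    linarith
  · have : 0 < 2 / p := by positivity
    linarith

lemma key_pointwise {d : ℕ} (B : Matrix (Fin d) (Fin d) ℂ) {p r gp gr m : ℝ}
    (hp : 1 < p) (hr : 1 < r)
    (hgr0 : 0 ≤ gr) (hgrp : gr ≤ gp)
    (hcc : |1 - 2 / r| ≤ |1 - 2 / p|)
    (hm : ∀ ζ : Fin d → ℂ, enorm2 ζ = 1 → m ≤ deltaForm p (B - ((gp : ℂ) • 1)) ζ)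
    {ξ : Fin d → ℂ} (hξ : enorm2 ξ = 1) :
    m ≤ deltaForm r (B - ((gr : ℂ) • 1)) ξ ∧ m ≤ deltaForm r B ξ := by
  set cp := |1 - 2 / p| with hcp
  set cr := |1 - 2 / r| with hcr
  have hcp1 : cp < 1 := abs_one_lt hp
  have hcr0 : 0 ≤ cr := abs_nonneg _
  set W : ℂ := wF B ξ - (gp : ℂ) * sF ξ with hW
  obtain ⟨v, hv1, hv2⟩ := exists_rot W
  have hnv : Complex.normSq v = 1 := by
    rw [← Complex.sq_norm, hv1, one_pow]
  -- the rotated vector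
  have hζ : enorm2 (v • ξ) = 1 := by rw [enorm2_smul, hnv, hξ, one_mul]
  have hrot : deltaForm p (B - ((gp : ℂ) • 1)) (v • ξ)
      = aF B ξ - gp - cp * ‖W‖ := by
    rw [deltaForm_sub, aF_smul, wF_smul, sF_smul, hnv, hζ, one_mul]
    have : v ^ 2 * wF B ξ - (gp : ℂ) * (v ^ 2 * sF ξ) = v ^ 2 * W := by rw [hW]; ring
    rw [this, hv2]
    simp [← hcp]
    ring
  have h1 : cp * ‖W‖ ≤ aF B ξ - gp - m := by
    have := hm (v • ξ) hζ
    rw [hrot] at this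
    linarith
  have habsW : 0 ≤ ‖W‖ := norm_nonneg _
  have habsσ : ‖sF ξ‖ ≤ 1 := abs_sF_le hξ
  have hσre : -1 ≤ (sF ξ).re := by
    have := Complex.abs_re_le_norm (sF ξ)
    rw [abs_le] at this
    linarith [this.1]
  -- first inequality
  have hre1 : -(‖W‖) - (gp - gr) ≤ (wF B ξ - (gr : ℂ) * sF ξ).re := by
    have hdec : wF B ξ - (gr : ℂ) * sF ξ = W + ((gp - gr : ℝ) : ℂ) * sF ξ := by
      rw [hW]; push_cast; ring
    have habs : ‖wF B ξ - (gr : ℂ) * sF ξ‖ ≤ ‖W‖ + (gp - gr) := by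
      rw [hdec]
      calc ‖W + ((gp - gr : ℝ) : ℂ) * sF ξ‖
          ≤ ‖W‖ + ‖((gp - gr : ℝ) : ℂ) * sF ξ‖ := norm_add_le _ _
        _ ≤ ‖W‖ + (gp - gr) := by
            rw [norm_mul, Complex.norm_real, Real.norm_eq_abs, abs_of_nonneg (by linarith : (0:ℝ) ≤ gp - gr)]
            nlinarith
    have := Complex.abs_re_le_norm (wF B ξ - (gr : ℂ) * sF ξ)
    rw [abs_le] at this
    linarith [this.1]
  have main1 : m ≤ deltaForm r (B - ((gr : ℂ) • 1)) ξ := by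
    rw [deltaForm_sub, hξ, mul_one, ← hcr]
    have hstep : cr * (wF B ξ - (gr : ℂ) * sF ξ).re ≥ -(cp * ‖W‖) - cr * (gp - gr) := by
      nlinarith [mul_le_mul_of_nonneg_left hre1 hcr0]
    nlinarith
  refine ⟨main1, ?_⟩
  -- second inequality
  rw [deltaForm_eq, ← hcr]
  rw [deltaForm_sub, hξ, mul_one, ← hcr] at main1
  have hdecre : (wF B ξ).re = (wF B ξ - (gr : ℂ) * sF ξ).re + gr * (sF ξ).re := by
    simp [Complex.sub_re, Complex.re_ofReal_mul]
  rw [hdecre]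
  have hpos : 0 ≤ gr * (1 + cr * (sF ξ).re) := by
    have : 0 ≤ 1 + cr * (sF ξ).re := by nlinarith
    exact mul_nonneg hgr0 this
  nlinarith [main1, hpos]

lemma g_eq {p q : ℝ} (hp : 1 < p) (hq : q = p / (p - 1)) :
    p * q / 4 = 1 / (1 - |1 - 2 / p| ^ 2) := by
  have h1 : p - 1 ≠ 0 := by intro h; linarith [sub_eq_zero.mp h]
  have h2 : p ≠ 0 := by positivity
  have hcp := abs_one_lt hp
  have h3 : 0 < 1 - |1 - 2 / p| ^ 2 := by nlinarith [abs_nonneg (1 - 2 / p)]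
  rw [hq, eq_div_iff (ne_of_gt h3), sq_abs]
  field_simp
  ring

lemma sum_abs_le {d : ℕ} {M : Matrix (Fin d) (Fin d) ℂ} {D : ℝ}
    (h : ∀ i j, ‖M i j‖ ≤ D) :
    ∑ j, ∑ k, ‖M j k‖ ≤ d * d * D := by
  calc ∑ j, ∑ k, ‖M j k‖ ≤ ∑ (_j : Fin d), ∑ (_k : Fin d), D :=
        Finset.sum_le_sum fun j _ => Finset.sum_le_sum fun k _ => h j k
    _ = d * d * D := by
        simp [Finset.sum_const, Finset.card_univ]
        ring

lemma entry_bound {d : ℕ} {B : Matrix (Fin d) (Fin d) ℂ} {C g : ℝ} (hg : 0 ≤ g)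
    (hB : ∀ i j, ‖B i j‖ ≤ C) (i j : Fin d) :
    ‖(B - ((g : ℂ) • 1)) i j‖ ≤ C + g := by
  rw [Matrix.sub_apply, Matrix.smul_apply, Matrix.one_apply, smul_eq_mul]
  calc ‖B i j - (g : ℂ) * if i = j then 1 else 0‖
      ≤ ‖B i j‖ + ‖(g : ℂ) * if i = j then 1 else 0‖ := by
        exact norm_sub_le _ _
    _ ≤ C + g := by
        refine add_le_add (hB i j) ?_
        rw [norm_mul, Complex.norm_real, Real.norm_eq_abs, abs_of_nonneg hg]
        by_cases hij : i = j <;> simp [hij] <;> nlinarith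

/-- Perturbed `p`-ellipticity interpolates: if `Δ_p(A - α(pq/4)I) > 0` then for every `r`
with `|1/2 - 1/r| ≤ |1/2 - 1/p|` one has `Δ_r(A - α(rr'/4)I) > 0`, and in particular
`Δ_r(A) > 0`. -/
theorem deltaP_perturbed_interpolation
    {d : ℕ} (hd : 1 ≤ d)
    (Ω : Set (EuclideanSpace ℝ (Fin d))) (hΩopen : IsOpen Ω) (hΩpos : 0 < volume Ω)
    (p q : ℝ) (hp : 1 < p) (hq : q = p / (p - 1))
    (α : ℝ) (hα : 0 ≤ α)
    (A : EuclideanSpace ℝ (Fin d) → Matrix (Fin d) (Fin d) ℂ)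
    (hAmeas : ∀ i j, Measurable fun x => A x i j)
    (hAbdd : ∃ C : ℝ, ∀ᵐ x ∂(volume.restrict Ω), ∀ i j, ‖A x i j‖ ≤ C)
    (hA : 0 < deltaP Ω p
      (fun x => A x - ((α * (p * q / 4) : ℝ) : ℂ) • (1 : Matrix (Fin d) (Fin d) ℂ)))
    (r r' : ℝ) (hr : 1 < r) (hr' : r' = r / (r - 1))
    (hrange : |1 / 2 - 1 / r| ≤ |1 / 2 - 1 / p|) :
    0 < deltaP Ω r
      (fun x => A x - ((α * (r * r' / 4) : ℝ) : ℂ) • (1 : Matrix (Fin d) (Fin d) ℂ)) ∧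
    0 < deltaP Ω r A := by
  classical
  set μ := volume.restrict Ω with hμ
  set gp : ℝ := α * (p * q / 4) with hgp
  set gr : ℝ := α * (r * r' / 4) with hgr
  set U : Set (Fin d → ℂ) := {ξ : Fin d → ℂ | enorm2 ξ = 1} with hU
  set f : EuclideanSpace ℝ (Fin d) → ℝ :=
    fun x => sInf (deltaForm p (A x - ((gp : ℂ) • 1)) '' U) with hf
  set g : EuclideanSpace ℝ (Fin d) → ℝ :=
    fun x => sInf (deltaForm r (A x - ((gr : ℂ) • 1)) '' U) with hg2
  set h : EuclideanSpace ℝ (Fin d) → ℝ :=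
    fun x => sInf (deltaForm r (A x) '' U) with hh
  -- basic constants
  have hcc : |1 - 2 / r| ≤ |1 - 2 / p| := by
    have e1 : |1 - 2 / r| = 2 * |1 / 2 - 1 / r| := by
      rw [show (1 : ℝ) - 2 / r = 2 * (1 / 2 - 1 / r) by ring, abs_mul, abs_two]
    have e2 : |1 - 2 / p| = 2 * |1 / 2 - 1 / p| := by
      rw [show (1 : ℝ) - 2 / p = 2 * (1 / 2 - 1 / p) by ring, abs_mul, abs_two]
    rw [e1, e2]
    linarith
  have hcp1 : |1 - 2 / p| < 1 := abs_one_lt hp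
  have hcr1 : |1 - 2 / r| < 1 := abs_one_lt hr
  have hcp0 : (0:ℝ) ≤ |1 - 2 / p| := abs_nonneg _
  have hcr0 : (0:ℝ) ≤ |1 - 2 / r| := abs_nonneg _
  have hgr0 : 0 ≤ gr := by
    rw [hgr, g_eq hr hr']
    have : 0 < 1 - |1 - 2 / r| ^ 2 := by nlinarith
    positivity
  have hgp0 : 0 ≤ gp := by
    rw [hgp, g_eq hp hq]
    have : 0 < 1 - |1 - 2 / p| ^ 2 := by nlinarith
    positivity
  have hgrp : gr ≤ gp := by
    rw [hgr, hgp, g_eq hr hr', g_eq hp hq]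
    have h1 : 0 < 1 - |1 - 2 / p| ^ 2 := by nlinarith
    have h2 : 1 - |1 - 2 / p| ^ 2 ≤ 1 - |1 - 2 / r| ^ 2 := by nlinarith
    have := one_div_le_one_div_of_le h1 h2
    nlinarith
  -- unit vector
  obtain ⟨ξ0, hξ0⟩ := exists_unit (d := d) hd
  have hξ0U : ξ0 ∈ U := hξ0
  -- nonempty and bddBelow facts (for every x)
  have hne : ∀ (M : Matrix (Fin d) (Fin d) ℂ) (s : ℝ),
      (deltaForm s M '' U).Nonempty := fun M s => ⟨_, ⟨ξ0, hξ0U, rfl⟩⟩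
  have hbdd : ∀ (M : Matrix (Fin d) (Fin d) ℂ) (s : ℝ), |1 - 2 / s| ≤ 1 →
      BddBelow (deltaForm s M '' U) := by
    intro M s hs
    refine ⟨-(2 * ∑ j, ∑ k, ‖M j k‖), ?_⟩
    rintro b ⟨ξ, hξ, rfl⟩
    have := deltaForm_bound hs M hξ
    rw [abs_le] at this
    exact this.1
  -- pointwise inequalities, valid for every x
  have hfg : ∀ x, f x ≤ g x := by
    intro x
    refine le_csInf (hne _ _) ?_
    rintro b ⟨ξ, hξ, rfl⟩
    exact (key_pointwise (A x) hp hr hgr0 hgrp hcc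
      (fun ζ hζ => csInf_le (hbdd _ _ hcp1.le) ⟨ζ, hζ, rfl⟩) hξ).1
  have hfh : ∀ x, f x ≤ h x := by
    intro x
    refine le_csInf (hne _ _) ?_
    rintro b ⟨ξ, hξ, rfl⟩
    exact (key_pointwise (A x) hp hr hgr0 hgrp hcc
      (fun ζ hζ => csInf_le (hbdd _ _ hcp1.le) ⟨ζ, hζ, rfl⟩) hξ).2
  -- a.e. bounds
  obtain ⟨C, hC⟩ := hAbdd
  have hC' : ∀ᵐ x ∂μ, ∀ i j, ‖A x i j‖ ≤ C := by
    filter_upwards [hC] with x hx i j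
    exact hx i j
  haveI : (ae μ).NeBot := by
    refine ae_neBot.mpr ?_
    intro h0
    have : μ Set.univ = 0 := by rw [h0]; rfl
    rw [hμ, Measure.restrict_apply_univ] at this
    exact absurd this (ne_of_gt hΩpos)
  have hflb : ∀ᵐ x ∂μ, -(2 * (d * d * (C + gp))) ≤ f x := by
    filter_upwards [hC'] with x hx
    refine le_csInf (hne _ _) ?_
    rintro b ⟨ξ, hξ, rfl⟩
    have h1 := deltaForm_bound hcp1.le (A x - ((gp : ℂ) • 1)) hξ
    rw [abs_le] at h1
    have h2 : ∑ j, ∑ k, ‖(A x - ((gp : ℂ) • 1)) j k‖ ≤ d * d * (C + gp) :=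
      sum_abs_le (entry_bound hgp0 hx)
    linarith [h1.1]
  have hgub : ∀ᵐ x ∂μ, g x ≤ 2 * (d * d * (C + gr)) := by
    filter_upwards [hC'] with x hx
    have h1 : g x ≤ deltaForm r (A x - ((gr : ℂ) • 1)) ξ0 :=
      csInf_le (hbdd _ _ hcr1.le) ⟨ξ0, hξ0U, rfl⟩
    have h2 := deltaForm_bound hcr1.le (A x - ((gr : ℂ) • 1)) hξ0
    rw [abs_le] at h2
    have h3 : ∑ j, ∑ k, ‖(A x - ((gr : ℂ) • 1)) j k‖ ≤ d * d * (C + gr) :=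
      sum_abs_le (entry_bound hgr0 hx)
    linarith [h2.2]
  have hhub : ∀ᵐ x ∂μ, h x ≤ 2 * (d * d * C) := by
    filter_upwards [hC'] with x hx
    have h1 : h x ≤ deltaForm r (A x) ξ0 :=
      csInf_le (hbdd _ _ hcr1.le) ⟨ξ0, hξ0U, rfl⟩
    have h2 := deltaForm_bound hcr1.le (A x) hξ0
    rw [abs_le] at h2
    have h3 : ∑ j, ∑ k, ‖A x j k‖ ≤ d * d * C := sum_abs_le hx
    linarith [h2.2]
  -- essInf step
  have hA' : 0 < essInf f μ := hA
  set ε : ℝ := essInf f μ / 2 with hε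
  have hε0 : 0 < ε := by positivity
  have hlt : ∀ᵐ x ∂μ, ε < f x := by
    refine ae_lt_of_lt_essInf (half_lt_self hA') ?_
    exact ⟨-(2 * (d * d * (C + gp))), Filter.eventually_map.mpr hflb⟩
  constructor
  · show 0 < essInf g μ
    have hcb : (ae μ).IsCoboundedUnder (· ≥ ·) g :=
      Filter.IsBoundedUnder.isCoboundedUnder_ge ⟨2 * (d * d * (C + gr)), Filter.eventually_map.mpr hgub⟩
    refine lt_of_lt_of_le hε0 (Filter.le_liminf_of_le hcb ?_)
    filter_upwards [hlt] with x hx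
    exact le_trans hx.le (hfg x)
  · show 0 < essInf h μ
    have hcb : (ae μ).IsCoboundedUnder (· ≥ ·) h :=
      Filter.IsBoundedUnder.isCoboundedUnder_ge ⟨2 * (d * d * C), Filter.eventually_map.mpr hhub⟩
    refine lt_of_lt_of_le hε0 (Filter.le_liminf_of_le hcb ?_)
    filter_upwards [hlt] with x hx
    exact le_trans hx.le (hfh x)
end

section
/- Let p ∈ (1,∞) and let A, B : Ω → ℂ^{d×d} be measurable and essentially bounded with Δ_p(A − B) > 0. Then there exists θ ∈ (0, π/2) such that Δ_p(e^{iφ}A − B) > 0 for all φ ∈ [−θ, θ]. In particular, if α ≥ 0 and Δ_p(A − α(pq/4)I_d) > 0, then there exists θ ∈ (0, π/2) such that Δ_p(e^{iφ}A − α(pq/4)I_d) > 0 for all φ ∈ [−θ, θ]. -/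
open MeasureTheory

lemma deltaForm_add {d : ℕ} (p : ℝ) (M N : Matrix (Fin d) (Fin d) ℂ) (ξ : Fin d → ℂ) :
    deltaForm p (M + N) ξ = deltaForm p M ξ + deltaForm p N ξ := by
  simp [deltaForm, Matrix.add_mulVec, Pi.add_apply, add_mul, Finset.sum_add_distrib,
    Complex.add_re]

lemma sphere_nonempty {d : ℕ} (hd : 1 ≤ d) :
    {ξ : Fin d → ℂ | enorm2 ξ = 1}.Nonempty := by
  refine ⟨fun j => if j = ⟨0, hd⟩ then 1 else 0, ?_⟩
  simp [enorm2, apply_ite Complex.normSq, Finset.sum_ite_eq']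

lemma abs_deltaForm_le {d : ℕ} (p : ℝ) {M : Matrix (Fin d) (Fin d) ℂ} {C : ℝ}
    (hC : ∀ i j, ‖M i j‖ ≤ C) (hC0 : 0 ≤ C) {ξ : Fin d → ℂ} (hξ : enorm2 ξ = 1) :
    |deltaForm p M ξ| ≤ (1 + |1 - 2 / p|) * C * d := by
  set s := |1 - 2 / p| with hsdef
  have hs0 : 0 ≤ s := abs_nonneg _
  have key : ∀ j, ‖M.mulVec ξ j *
      (starRingEnd ℂ) (ξ j + Complex.ofReal s * (starRingEnd ℂ) (ξ j))‖
      ≤ (C * ∑ k, ‖ξ k‖) * ((1 + s) * ‖ξ j‖) := by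
    intro j
    rw [norm_mul, RCLike.norm_conj]
    have h1 : ‖M.mulVec ξ j‖ ≤ C * ∑ k, ‖ξ k‖ := by
      rw [Matrix.mulVec, dotProduct]
      calc ‖∑ k, M j k * ξ k‖ ≤ ∑ k, ‖M j k * ξ k‖ := norm_sum_le _ _
        _ ≤ ∑ k, C * ‖ξ k‖ := Finset.sum_le_sum fun k _ => by
            rw [norm_mul]; exact mul_le_mul_of_nonneg_right (hC j k) (norm_nonneg _)
        _ = C * ∑ k, ‖ξ k‖ := by rw [Finset.mul_sum]
    have h2 : ‖ξ j + Complex.ofReal s * (starRingEnd ℂ) (ξ j)‖ ≤ (1 + s) * ‖ξ j‖ := by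
      calc ‖ξ j + Complex.ofReal s * (starRingEnd ℂ) (ξ j)‖
          ≤ ‖ξ j‖ + ‖Complex.ofReal s * (starRingEnd ℂ) (ξ j)‖ := norm_add_le _ _
        _ = ‖ξ j‖ + s * ‖ξ j‖ := by
            rw [norm_mul, RCLike.norm_conj, Complex.norm_real, Real.norm_eq_abs,
              abs_of_nonneg hs0]
        _ = (1 + s) * ‖ξ j‖ := by ring
    exact mul_le_mul h1 h2 (norm_nonneg _) (by positivity)
  have hT : (∑ k, ‖ξ k‖) ^ 2 ≤ (d : ℝ) := by
    calc (∑ k, ‖ξ k‖) ^ 2 ≤ (Finset.univ.card : ℝ) * ∑ k, ‖ξ k‖ ^ 2 :=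
          sq_sum_le_card_mul_sum_sq
      _ = (d : ℝ) * ∑ k, ‖ξ k‖ ^ 2 := by simp
      _ = (d : ℝ) := by
          have : ∑ k, ‖ξ k‖ ^ 2 = enorm2 ξ := by
            simp [enorm2, Complex.normSq_eq_norm_sq]
          rw [this, hξ, mul_one]
  calc |deltaForm p M ξ| ≤ ‖∑ j, M.mulVec ξ j *
        (starRingEnd ℂ) (ξ j + Complex.ofReal s * (starRingEnd ℂ) (ξ j))‖ := by
        exact Complex.abs_re_le_norm _
    _ ≤ ∑ j, ‖M.mulVec ξ j *
        (starRingEnd ℂ) (ξ j + Complex.ofReal s * (starRingEnd ℂ) (ξ j))‖ := norm_sum_le _ _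
    _ ≤ ∑ j, (C * ∑ k, ‖ξ k‖) * ((1 + s) * ‖ξ j‖) := Finset.sum_le_sum fun j _ => key j
    _ = (C * ∑ k, ‖ξ k‖) * ((1 + s) * ∑ j, ‖ξ j‖) := by
        rw [← Finset.mul_sum, ← Finset.mul_sum]
    _ = (1 + s) * C * (∑ j, ‖ξ j‖) ^ 2 := by ring
    _ ≤ (1 + s) * C * d := by
        have h : (0:ℝ) ≤ (1 + s) * C := by positivity
        nlinarith
lemma image_bddBelow {d : ℕ} (p : ℝ) {M : Matrix (Fin d) (Fin d) ℂ} {C : ℝ}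
    (hC : ∀ i j, ‖M i j‖ ≤ C) (hC0 : 0 ≤ C) :
    BddBelow (deltaForm p M '' {ξ : Fin d → ℂ | enorm2 ξ = 1}) := by
  refine ⟨-((1 + |1 - 2 / p|) * C * d), ?_⟩
  rintro y ⟨ξ, hξ, rfl⟩
  have := abs_deltaForm_le p hC hC0 hξ
  exact neg_le_of_abs_le this

lemma sInf_le_bound {d : ℕ} (hd : 1 ≤ d) (p : ℝ) {M : Matrix (Fin d) (Fin d) ℂ} {C : ℝ}
    (hC : ∀ i j, ‖M i j‖ ≤ C) (hC0 : 0 ≤ C) :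
    sInf (deltaForm p M '' {ξ : Fin d → ℂ | enorm2 ξ = 1}) ≤ (1 + |1 - 2 / p|) * C * d := by
  obtain ⟨ξ0, hξ0⟩ := sphere_nonempty hd
  refine csInf_le_of_le (image_bddBelow p hC hC0) ⟨ξ0, hξ0, rfl⟩ ?_
  exact le_of_abs_le (abs_deltaForm_le p hC hC0 hξ0)

lemma sInf_add_ge {d : ℕ} (hd : 1 ≤ d) (p : ℝ) {M N : Matrix (Fin d) (Fin d) ℂ}
    {C b : ℝ} (hC : ∀ i j, ‖M i j‖ ≤ C) (hC0 : 0 ≤ C)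
    (hb : ∀ ξ : Fin d → ℂ, enorm2 ξ = 1 → |deltaForm p N ξ| ≤ b) :
    sInf (deltaForm p M '' {ξ : Fin d → ℂ | enorm2 ξ = 1}) - b ≤
      sInf (deltaForm p (M + N) '' {ξ : Fin d → ℂ | enorm2 ξ = 1}) := by
  refine le_csInf ((sphere_nonempty hd).image _) ?_
  rintro y ⟨ξ, hξ, rfl⟩
  have h1 : sInf (deltaForm p M '' {ξ : Fin d → ℂ | enorm2 ξ = 1}) ≤ deltaForm p M ξ :=
    csInf_le (image_bddBelow p hC hC0) ⟨ξ, hξ, rfl⟩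
  have h2 : -b ≤ deltaForm p N ξ := neg_le_of_abs_le (hb ξ hξ)
  rw [deltaForm_add]; linarith

lemma liminf_pos_extract {α : Type*} {F : Filter α} {f : α → ℝ}
    (h : 0 < Filter.liminf f F) : ∃ a : ℝ, 0 < a ∧ ∀ᶠ x in F, a ≤ f x := by
  rw [Filter.liminf_eq] at h
  by_cases hne : {a : ℝ | ∀ᶠ x in F, a ≤ f x}.Nonempty
  · by_cases hbdd : BddAbove {a : ℝ | ∀ᶠ x in F, a ≤ f x}
    · obtain ⟨a, haS, ha⟩ := exists_lt_of_lt_csSup hne h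
      exact ⟨a, ha, haS⟩
    · rw [Real.sSup_of_not_bddAbove hbdd] at h; exact absurd h (lt_irrefl 0)
  · rw [Set.not_nonempty_iff_eq_empty] at hne
    rw [hne, Real.sSup_empty] at h; exact absurd h (lt_irrefl 0)

lemma pos_liminf {α : Type*} {F : Filter α} [F.NeBot] {f : α → ℝ} {a C : ℝ}
    (ha : 0 < a) (h : ∀ᶠ x in F, a ≤ f x) (hub : ∀ᶠ x in F, f x ≤ C) :
    0 < Filter.liminf f F := by
  rw [Filter.liminf_eq]
  have hbdd : BddAbove {b : ℝ | ∀ᶠ x in F, b ≤ f x} := by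
    refine ⟨C, fun b hb => ?_⟩
    obtain ⟨x, hx1, hx2⟩ := (hb.and hub).exists
    linarith
  exact lt_of_lt_of_le ha (le_csSup hbdd h)


lemma main_rotation {d : ℕ} (hd : 1 ≤ d) (Ω : Set (EuclideanSpace ℝ (Fin d)))
    (hΩpos : 0 < volume Ω) (p : ℝ)
    (A B : EuclideanSpace ℝ (Fin d) → Matrix (Fin d) (Fin d) ℂ)
    (hAbdd : ∃ C : ℝ, ∀ᵐ x ∂(volume.restrict Ω), ∀ i j, ‖A x i j‖ ≤ C)
    (hBbdd : ∃ C : ℝ, ∀ᵐ x ∂(volume.restrict Ω), ∀ i j, ‖B x i j‖ ≤ C)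
    (hAB : 0 < deltaP Ω p (fun x => A x - B x)) :
    ∃ θ : ℝ, 0 < θ ∧ θ < Real.pi / 2 ∧ ∀ φ : ℝ, |φ| ≤ θ →
      0 < deltaP Ω p (fun x => Complex.exp ((φ : ℂ) * Complex.I) • A x - B x) := by
  obtain ⟨CA0, hA0⟩ := hAbdd
  obtain ⟨CB0, hB0⟩ := hBbdd
  set CA : ℝ := max CA0 0 with hCAdef
  set CB : ℝ := max CB0 0 with hCBdef
  have hCA0 : 0 ≤ CA := le_max_right _ _
  have hCB0 : 0 ≤ CB := le_max_right _ _
  have hA : ∀ᵐ x ∂(volume.restrict Ω), ∀ i j, ‖A x i j‖ ≤ CA :=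
    hA0.mono fun x hx i j => (hx i j).trans (le_max_left _ _)
  have hB : ∀ᵐ x ∂(volume.restrict Ω), ∀ i j, ‖B x i j‖ ≤ CB :=
    hB0.mono fun x hx i j => (hx i j).trans (le_max_left _ _)
  haveI : (ae (volume.restrict Ω)).NeBot :=
    ae_neBot.mpr (by rw [Ne, Measure.restrict_eq_zero]; exact hΩpos.ne')
  set s : ℝ := |1 - 2 / p| with hsdef
  have hs0 : 0 ≤ s := abs_nonneg _
  have hd' : (1 : ℝ) ≤ (d : ℝ) := by exact_mod_cast hd
  obtain ⟨a, ha, haef⟩ := liminf_pos_extract (F := ae (volume.restrict Ω))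
    (f := fun x => sInf (deltaForm p (A x - B x) '' {ξ : Fin d → ℂ | enorm2 ξ = 1})) hAB
  set K : ℝ := 2 * (1 + s) * (CA + 1) * d with hKdef
  have hK : 0 < K := by
    have h1 : (0:ℝ) < 1 + s := by linarith
    have h2 : (0:ℝ) < CA + 1 := by linarith
    have h3 : (0:ℝ) < (d:ℝ) := by linarith
    rw [hKdef]
    exact mul_pos (mul_pos (mul_pos two_pos h1) h2) h3
  have hKne : K ≠ 0 := hK.ne'
  refine ⟨min (Real.pi / 4) (min 1 (a / (2 * K))), ?_, ?_, ?_⟩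
  · refine lt_min (by linarith [Real.pi_pos]) (lt_min one_pos ?_)
    exact div_pos ha (by linarith)
  · exact (min_le_left _ _).trans_lt (by linarith [Real.pi_pos])
  · intro φ hφ
    have hφ1 : |φ| ≤ 1 := hφ.trans ((min_le_right _ _).trans (min_le_left _ _))
    have hφa : |φ| ≤ a / (2 * K) := hφ.trans ((min_le_right _ _).trans (min_le_right _ _))
    set c : ℂ := Complex.exp ((φ : ℂ) * Complex.I) - 1 with hcdef
    have habsφI : ‖(φ : ℂ) * Complex.I‖ = |φ| := by simp
    have hcabs : ‖c‖ ≤ 2 * |φ| := by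
      rw [hcdef]
      calc ‖Complex.exp ((φ : ℂ) * Complex.I) - 1‖
          ≤ 2 * ‖(φ : ℂ) * Complex.I‖ :=
            Complex.norm_exp_sub_one_le (by rw [habsφI]; exact hφ1)
        _ = 2 * |φ| := by rw [habsφI]
    show 0 < Filter.liminf (fun x => sInf (deltaForm p
        (Complex.exp ((φ : ℂ) * Complex.I) • A x - B x) ''
        {ξ : Fin d → ℂ | enorm2 ξ = 1})) (ae (volume.restrict Ω))
    refine pos_liminf (a := a / 2) (C := (1 + s) * (CA + CB) * d) (by linarith) ?_ ?_
    · filter_upwards [hA, hB, haef] with x hxA hxB hxa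
      have hM : ∀ i j, ‖(A x - B x) i j‖ ≤ CA + CB := fun i j => by
        rw [Matrix.sub_apply]
        exact (norm_sub_le _ _).trans (add_le_add (hxA i j) (hxB i j))
      have hNentry : ∀ i j, ‖(c • A x) i j‖ ≤ 2 * |φ| * CA := fun i j => by
        rw [Matrix.smul_apply, smul_eq_mul, norm_mul]
        exact mul_le_mul hcabs (hxA i j) (norm_nonneg _) (by positivity)
      have hNb : ∀ ξ : Fin d → ℂ, enorm2 ξ = 1 → |deltaForm p (c • A x) ξ| ≤ a / 2 := by
        intro ξ hξ
        refine (abs_deltaForm_le p hNentry (by positivity) hξ).trans ?_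
        have h2 : (1 + s) * (2 * |φ| * CA) * d ≤ K * |φ| := by
          have e1 : (1 + s) * (2 * |φ| * CA) * (d : ℝ) = 2 * (1 + s) * CA * d * |φ| := by ring
          have e2 : K * |φ| = 2 * (1 + s) * (CA + 1) * d * |φ| := by rw [hKdef]
          rw [e1, e2]
          have : (2 * (1 + s) * CA * d : ℝ) ≤ 2 * (1 + s) * (CA + 1) * d := by nlinarith
          exact mul_le_mul_of_nonneg_right this (abs_nonneg φ)
        have h3 : K * |φ| ≤ a / 2 := by
          calc K * |φ| ≤ K * (a / (2 * K)) := mul_le_mul_of_nonneg_left hφa hK.le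
            _ = a / 2 := by field_simp
        linarith
      have heq : Complex.exp ((φ : ℂ) * Complex.I) • A x - B x = (A x - B x) + c • A x := by
        rw [hcdef, sub_smul, one_smul]; abel
      rw [heq]
      have hkey := sInf_add_ge hd p (N := c • A x) hM (by positivity) hNb
      have hxa' : a ≤ sInf (deltaForm p (A x - B x) '' {ξ : Fin d → ℂ | enorm2 ξ = 1}) := hxa
      linarith
    · filter_upwards [hA, hB] with x hxA hxB
      have hent : ∀ i j, ‖(Complex.exp ((φ : ℂ) * Complex.I) • A x - B x) i j‖ ≤ CA + CB := by
        intro i j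
        rw [Matrix.sub_apply, Matrix.smul_apply, smul_eq_mul]
        have h1 : ‖Complex.exp ((φ : ℂ) * Complex.I) * A x i j‖ ≤ CA := by
          rw [norm_mul, Complex.norm_exp_ofReal_mul_I, one_mul]
          exact hxA i j
        exact (norm_sub_le _ _).trans (add_le_add h1 (hxB i j))
      exact sInf_le_bound hd p hent (by positivity)


/-- If `Δ_p(A - B) > 0` then there exists `θ ∈ (0, π/2)` such that
`Δ_p(e^{iφ}A - B) > 0` for all `|φ| ≤ θ`; in particular, if `α ≥ 0` and
`Δ_p(A - α(pq/4)I) > 0` then `Δ_p(e^{iφ}A - α(pq/4)I) > 0` for `|φ| ≤ θ`. -/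
theorem deltaP_small_rotation
    {d : ℕ} (hd : 1 ≤ d)
    (Ω : Set (EuclideanSpace ℝ (Fin d))) (hΩopen : IsOpen Ω) (hΩpos : 0 < volume Ω)
    (p q : ℝ) (hp : 1 < p) (hq : q = p / (p - 1))
    (A B : EuclideanSpace ℝ (Fin d) → Matrix (Fin d) (Fin d) ℂ)
    (hAmeas : ∀ i j, Measurable fun x => A x i j)
    (hBmeas : ∀ i j, Measurable fun x => B x i j)
    (hAbdd : ∃ C : ℝ, ∀ᵐ x ∂(volume.restrict Ω), ∀ i j, ‖A x i j‖ ≤ C)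
    (hBbdd : ∃ C : ℝ, ∀ᵐ x ∂(volume.restrict Ω), ∀ i j, ‖B x i j‖ ≤ C)
    (hAB : 0 < deltaP Ω p (fun x => A x - B x)) :
    (∃ θ : ℝ, 0 < θ ∧ θ < Real.pi / 2 ∧ ∀ φ : ℝ, |φ| ≤ θ →
      0 < deltaP Ω p (fun x => Complex.exp ((φ : ℂ) * Complex.I) • A x - B x)) ∧
    (∀ α : ℝ, 0 ≤ α →
      0 < deltaP Ω p
        (fun x => A x - ((α * (p * q / 4) : ℝ) : ℂ) • (1 : Matrix (Fin d) (Fin d) ℂ)) →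
      ∃ θ : ℝ, 0 < θ ∧ θ < Real.pi / 2 ∧ ∀ φ : ℝ, |φ| ≤ θ →
        0 < deltaP Ω p (fun x => Complex.exp ((φ : ℂ) * Complex.I) • A x -
          ((α * (p * q / 4) : ℝ) : ℂ) • (1 : Matrix (Fin d) (Fin d) ℂ))) := by
  constructor
  · exact main_rotation hd Ω hΩpos p A B hAbdd hBbdd hAB
  · intro α hα hα'
    refine main_rotation hd Ω hΩpos p A
      (fun _ => ((α * (p * q / 4) : ℝ) : ℂ) • (1 : Matrix (Fin d) (Fin d) ℂ))
      hAbdd ⟨‖((α * (p * q / 4) : ℝ) : ℂ)‖, ?_⟩ hα'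
    refine Filter.Eventually.of_forall fun x i j => ?_
    show ‖(((α * (p * q / 4) : ℝ) : ℂ) • (1 : Matrix (Fin d) (Fin d) ℂ)) i j‖ ≤ _
    rw [Matrix.smul_apply, Matrix.one_apply, smul_eq_mul]
    by_cases hij : i = j <;> simp [hij]
    positivity
end

section
/- Let F : ℝ² × ℝ² → [0,∞) be locally integrable on ℝ⁴ and suppose there is a function G : [0,∞)² → [0,∞) with F(ζ,η) = G(|ζ|,|η|) for all ζ, η ∈ ℝ². Then for every ω = (ζ,η) ∈ ℝ² × ℝ² and every ν ∈ (0,1): ∫_{ℝ⁴} P_ζ(ζ')·F(ω − ω')·φ_ν(ω') dω' ≥ 0 and ∫_{ℝ⁴} P_η(η')·F(ω − ω')·φ_ν(ω') dω' ≥ 0, where ω' = (ζ',η') and P_ζ(ζ') = ⟨ζ, ζ − ζ'⟩. -/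
open MeasureTheory

noncomputable section MollifiedAux

local notation "E2" => EuclideanSpace ℝ (Fin 2)

/-- Reflection of `x` in the hyperplane through the origin orthogonal to `ζ`. -/
def reflMap (ζ x : E2) : E2 := x - ((2 * (inner ℝ ζ x : ℝ)) / ‖ζ‖ ^ 2) • ζ

lemma inner_reflMap (ζ x : E2) (hζ : ζ ≠ 0) :
    (inner ℝ ζ (reflMap ζ x) : ℝ) = -(inner ℝ ζ x : ℝ) := by
  have hn : ‖ζ‖ ^ 2 ≠ 0 := pow_ne_zero _ (norm_ne_zero_iff.2 hζ)
  rw [reflMap, inner_sub_right, real_inner_smul_right, real_inner_self_eq_norm_sq]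
  field_simp
  ring

lemma reflMap_invol (ζ : E2) (hζ : ζ ≠ 0) (x : E2) : reflMap ζ (reflMap ζ x) = x := by
  have h := inner_reflMap ζ x hζ
  rw [show reflMap ζ (reflMap ζ x)
      = reflMap ζ x - ((2 * (inner ℝ ζ (reflMap ζ x) : ℝ)) / ‖ζ‖ ^ 2) • ζ from rfl, h, reflMap]
  rw [mul_neg, neg_div, neg_smul, sub_neg_eq_add]
  abel

lemma norm_reflMap (ζ : E2) (hζ : ζ ≠ 0) (x : E2) : ‖reflMap ζ x‖ = ‖x‖ := by
  have hn : ‖ζ‖ ^ 2 ≠ 0 := pow_ne_zero _ (norm_ne_zero_iff.2 hζ)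
  have hsq : ‖reflMap ζ x‖ ^ 2 = ‖x‖ ^ 2 := by
    rw [reflMap, norm_sub_sq_real, real_inner_smul_right, norm_smul, mul_pow,
      Real.norm_eq_abs, sq_abs, real_inner_comm x ζ]
    field_simp
    ring
  calc ‖reflMap ζ x‖ = Real.sqrt (‖reflMap ζ x‖ ^ 2) := (Real.sqrt_sq (norm_nonneg _)).symm
    _ = Real.sqrt (‖x‖ ^ 2) := by rw [hsq]
    _ = ‖x‖ := Real.sqrt_sq (norm_nonneg _)

/-- `reflMap` as a linear isometry equivalence. -/
def reflLI (ζ : E2) (hζ : ζ ≠ 0) : E2 ≃ₗᵢ[ℝ] E2 where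
  toFun := reflMap ζ
  invFun := reflMap ζ
  left_inv := reflMap_invol ζ hζ
  right_inv := reflMap_invol ζ hζ
  map_add' x y := by
    simp only [reflMap, inner_add_right]
    rw [mul_add, add_div, add_smul]
    abel
  map_smul' r x := by
    simp only [reflMap, real_inner_smul_right, RingHom.id_apply, smul_sub, smul_smul]
    rw [show 2 * (r * (inner ℝ ζ x : ℝ)) / ‖ζ‖ ^ 2
        = r * (2 * (inner ℝ ζ x : ℝ) / ‖ζ‖ ^ 2) by ring]
  norm_map' := norm_reflMap ζ hζ

/-- Reflection of `x` in the affine hyperplane through `ζ` orthogonal to `ζ`. -/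
def T0 (ζ x : E2) : E2 := reflMap ζ x + (2 : ℝ) • ζ

lemma reflMap_two_smul (ζ : E2) (hζ : ζ ≠ 0) :
    reflMap ζ ((2 : ℝ) • ζ) = -((2 : ℝ) • ζ) := by
  have hn : ‖ζ‖ ^ 2 ≠ 0 := pow_ne_zero _ (norm_ne_zero_iff.2 hζ)
  rw [reflMap, real_inner_smul_right, real_inner_self_eq_norm_sq,
    show 2 * (2 * ‖ζ‖ ^ 2) / ‖ζ‖ ^ 2 = 4 by field_simp; ring]
  module

lemma T0_invol (ζ : E2) (hζ : ζ ≠ 0) (x : E2) : T0 ζ (T0 ζ x) = x := by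
  unfold T0
  have hadd : reflMap ζ (reflMap ζ x + (2 : ℝ) • ζ)
      = reflMap ζ (reflMap ζ x) + reflMap ζ ((2 : ℝ) • ζ) := (reflLI ζ hζ).map_add _ _
  rw [hadd, reflMap_invol ζ hζ, reflMap_two_smul ζ hζ]
  abel

lemma inner_T0 (ζ : E2) (hζ : ζ ≠ 0) (x : E2) :
    (inner ℝ ζ (ζ - T0 ζ x) : ℝ) = -(inner ℝ ζ (ζ - x) : ℝ) := by
  rw [inner_sub_right, inner_sub_right, T0, inner_add_right, inner_reflMap ζ x hζ,
    real_inner_smul_right, real_inner_self_eq_norm_sq]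
  ring

lemma norm_sub_T0 (ζ : E2) (hζ : ζ ≠ 0) (x : E2) : ‖ζ - T0 ζ x‖ = ‖ζ - x‖ := by
  have hn : ‖ζ‖ ^ 2 ≠ 0 := pow_ne_zero _ (norm_ne_zero_iff.2 hζ)
  have key : ζ - T0 ζ x = reflMap ζ (ζ - x) := by
    rw [T0, reflMap, reflMap, inner_sub_right, real_inner_self_eq_norm_sq,
      show (2 * (‖ζ‖ ^ 2 - (inner ℝ ζ x : ℝ))) / ‖ζ‖ ^ 2
        = 2 - (2 * (inner ℝ ζ x : ℝ)) / ‖ζ‖ ^ 2 by field_simp]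
    module
  rw [key, norm_reflMap ζ hζ]

lemma norm_T0_sq (ζ : E2) (hζ : ζ ≠ 0) (x : E2) :
    ‖T0 ζ x‖ ^ 2 = ‖x‖ ^ 2 + 4 * (inner ℝ ζ (ζ - x) : ℝ) := by
  rw [T0, norm_add_sq_real, norm_reflMap ζ hζ, real_inner_smul_right,
    real_inner_comm ζ (reflMap ζ x), inner_reflMap ζ x hζ, norm_smul, Real.norm_eq_abs,
    mul_pow, sq_abs, inner_sub_right, real_inner_self_eq_norm_sq]
  ring

lemma T0_measurePreserving (ζ : E2) (hζ : ζ ≠ 0) :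
    MeasurePreserving (T0 ζ) (volume : Measure E2) volume :=
  (measurePreserving_add_right (volume : Measure E2) ((2 : ℝ) • ζ)).comp
    (reflLI ζ hζ).measurePreserving

/-- `T0` as a homeomorphism. -/
def T0h (ζ : E2) (hζ : ζ ≠ 0) : E2 ≃ₜ E2 where
  toFun := T0 ζ
  invFun := T0 ζ
  left_inv := T0_invol ζ hζ
  right_inv := T0_invol ζ hζ
  continuous_toFun := by exact ((reflLI ζ hζ).continuous.add continuous_const)
  continuous_invFun := by exact ((reflLI ζ hζ).continuous.add continuous_const)

theorem mollified_pairing_nonneg_aux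
    (F : E2 × E2 → ℝ) (hF0 : ∀ w, 0 ≤ F w)
    (G : ℝ → ℝ → ℝ) (hG : ∀ a b : E2, F (a, b) = G ‖a‖ ‖b‖)
    (φ : E2 × E2 → ℝ) (ρ : ℝ → ℝ) (hρ : AntitoneOn ρ (Set.Ici 0))
    (hφρ : ∀ w : E2 × E2, φ w = ρ (Real.sqrt (‖w.1‖ ^ 2 + ‖w.2‖ ^ 2)))
    (ζ η : E2) (ν : ℝ) (hν0 : 0 < ν) :
    0 ≤ ∫ w' : E2 × E2,
      (inner ℝ ζ (ζ - w'.1) : ℝ) * F ((ζ, η) - w') * ((ν ^ 4)⁻¹ * φ (ν⁻¹ • w')) := by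
  by_cases hζ : ζ = 0
  · simp [hζ]
  have hφρ' : ∀ a b : E2, φ (a, b) = ρ (Real.sqrt (‖a‖ ^ 2 + ‖b‖ ^ 2)) := fun a b => hφρ (a, b)
  set f : E2 × E2 → ℝ := fun w' =>
    (inner ℝ ζ (ζ - w'.1) : ℝ) * F ((ζ, η) - w') * ((ν ^ 4)⁻¹ * φ (ν⁻¹ • w')) with hfdef
  have hT : MeasurePreserving (Prod.map (T0 ζ) (id : E2 → E2))
      (volume : Measure (E2 × E2)) volume := by
    have := (T0_measurePreserving ζ hζ).prod (MeasurePreserving.id (volume : Measure E2))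
    rwa [← Measure.volume_eq_prod] at this
  have hemb : MeasurableEmbedding (Prod.map (T0 ζ) (id : E2 → E2)) :=
    ((T0h ζ hζ).prodCongr (Homeomorph.refl E2)).measurableEmbedding
  have hkey : ∀ w' : E2 × E2, 0 ≤ f w' + f (Prod.map (T0 ζ) (id : E2 → E2) w') := by
    rintro ⟨x, y⟩
    have hcn : (0 : ℝ) ≤ (ν ^ 4)⁻¹ := by positivity
    have hns : ∀ z : E2, ‖ν⁻¹ • z‖ ^ 2 = ν⁻¹ ^ 2 * ‖z‖ ^ 2 := fun z => by
      rw [norm_smul, mul_pow, Real.norm_eq_abs, sq_abs]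
    have hFA : (0 : ℝ) ≤ G ‖ζ - x‖ ‖η - y‖ := by rw [← hG]; exact hF0 _
    set s : ℝ := Real.sqrt (‖ν⁻¹ • x‖ ^ 2 + ‖ν⁻¹ • y‖ ^ 2) with hs
    set s' : ℝ := Real.sqrt (‖ν⁻¹ • T0 ζ x‖ ^ 2 + ‖ν⁻¹ • y‖ ^ 2) with hs'
    have hrw : f (x, y) + f (Prod.map (T0 ζ) (id : E2 → E2) (x, y)) =
        (inner ℝ ζ (ζ - x) : ℝ) * (G ‖ζ - x‖ ‖η - y‖ * ((ν ^ 4)⁻¹ * (ρ s - ρ s'))) := by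
      show (inner ℝ ζ (ζ - x) : ℝ) * F (ζ - x, η - y) * ((ν ^ 4)⁻¹ * φ (ν⁻¹ • x, ν⁻¹ • y))
          + (inner ℝ ζ (ζ - T0 ζ x) : ℝ) * F (ζ - T0 ζ x, η - y)
            * ((ν ^ 4)⁻¹ * φ (ν⁻¹ • T0 ζ x, ν⁻¹ • y)) = _
      rw [hG, hG, hφρ', hφρ', inner_T0 ζ hζ x, norm_sub_T0 ζ hζ x, ← hs, ← hs']
      ring
    rw [hrw]
    rcases le_or_gt 0 (inner ℝ ζ (ζ - x) : ℝ) with hpos | hneg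
    · have hle : s ≤ s' := by
        apply Real.sqrt_le_sqrt
        rw [hns x, hns y, hns (T0 ζ x), norm_T0_sq ζ hζ x]
        nlinarith [sq_nonneg ν⁻¹]
      have hρle : ρ s' ≤ ρ s :=
        hρ (Set.mem_Ici.2 (Real.sqrt_nonneg _)) (Set.mem_Ici.2 (Real.sqrt_nonneg _)) hle
      exact mul_nonneg hpos (mul_nonneg hFA (mul_nonneg hcn (sub_nonneg.2 hρle)))
    · have hle : s' ≤ s := by
        apply Real.sqrt_le_sqrt
        rw [hns x, hns y, hns (T0 ζ x), norm_T0_sq ζ hζ x]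
        nlinarith [sq_nonneg ν⁻¹]
      have hρle : ρ s ≤ ρ s' :=
        hρ (Set.mem_Ici.2 (Real.sqrt_nonneg _)) (Set.mem_Ici.2 (Real.sqrt_nonneg _)) hle
      have h1 : (ν ^ 4)⁻¹ * (ρ s - ρ s') ≤ 0 :=
        mul_nonpos_iff.2 (Or.inl ⟨hcn, sub_nonpos.2 hρle⟩)
      have h2 : G ‖ζ - x‖ ‖η - y‖ * ((ν ^ 4)⁻¹ * (ρ s - ρ s')) ≤ 0 :=
        mul_nonpos_iff.2 (Or.inl ⟨hFA, h1⟩)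
      exact mul_nonneg_iff.2 (Or.inr ⟨hneg.le, h2⟩)
  have hint : ∫ w', f (Prod.map (T0 ζ) (id : E2 → E2) w') = ∫ w', f w' :=
    hT.integral_comp hemb f
  by_cases hf : Integrable f (volume : Measure (E2 × E2))
  · have h2 : Integrable (fun w' => f (Prod.map (T0 ζ) (id : E2 → E2) w'))
        (volume : Measure (E2 × E2)) := (hT.integrable_comp_emb hemb).2 hf
    have h3 : 0 ≤ ∫ w', (f w' + f (Prod.map (T0 ζ) (id : E2 → E2) w')) :=
      integral_nonneg hkey
    rw [integral_add hf h2] at h3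
    linarith
  · rw [integral_undef hf]

end MollifiedAux

/-- If `F ≥ 0` is locally integrable on `ℝ² × ℝ²` and radial in each of its two variables,
then for every `ω = (ζ,η)` and `ν ∈ (0,1)` the mollified integrals of `P_ζ(ζ')F(ω - ω')`
and `P_η(η')F(ω - ω')` against the radially nonincreasing kernel `φ_ν` are nonnegative. -/
theorem mollified_pairing_nonneg
    (F : EuclideanSpace ℝ (Fin 2) × EuclideanSpace ℝ (Fin 2) → ℝ)
    (hF0 : ∀ w, 0 ≤ F w)
    (hFloc : LocallyIntegrable F volume)
    (hFrad : ∃ G : ℝ → ℝ → ℝ, ∀ ζ η : EuclideanSpace ℝ (Fin 2), F (ζ, η) = G ‖ζ‖ ‖η‖)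
    (φ : EuclideanSpace ℝ (Fin 2) × EuclideanSpace ℝ (Fin 2) → ℝ)
    (hφsm : ContDiff ℝ (⊤ : ℕ∞) φ)
    (hφ0 : ∀ w, 0 ≤ φ w) (hφ1 : ∀ w, φ w ≤ 1)
    (hφint : ∫ w, φ w = 1)
    (hφsupp : ∀ w : EuclideanSpace ℝ (Fin 2) × EuclideanSpace ℝ (Fin 2),
      1 < ‖w.1‖ ^ 2 + ‖w.2‖ ^ 2 → φ w = 0)
    (hφrad : ∃ ρ : ℝ → ℝ, AntitoneOn ρ (Set.Ici 0) ∧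
      ∀ w : EuclideanSpace ℝ (Fin 2) × EuclideanSpace ℝ (Fin 2),
        φ w = ρ (Real.sqrt (‖w.1‖ ^ 2 + ‖w.2‖ ^ 2)))
    (ζ η : EuclideanSpace ℝ (Fin 2)) (ν : ℝ) (hν0 : 0 < ν) (hν1 : ν < 1) :
    (0 ≤ ∫ w' : EuclideanSpace ℝ (Fin 2) × EuclideanSpace ℝ (Fin 2),
      (inner ℝ ζ (ζ - w'.1) : ℝ) * F ((ζ, η) - w') * ((ν ^ 4)⁻¹ * φ (ν⁻¹ • w'))) ∧
    (0 ≤ ∫ w' : EuclideanSpace ℝ (Fin 2) × EuclideanSpace ℝ (Fin 2),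
      (inner ℝ η (η - w'.2) : ℝ) * F ((ζ, η) - w') * ((ν ^ 4)⁻¹ * φ (ν⁻¹ • w'))) := by
  obtain ⟨G, hG⟩ := hFrad
  obtain ⟨ρ, hρ, hφρ⟩ := hφrad
  constructor
  · exact mollified_pairing_nonneg_aux F hF0 G hG φ ρ hρ hφρ ζ η ν hν0
  · have hsw : MeasurePreserving
        (Prod.swap : EuclideanSpace ℝ (Fin 2) × EuclideanSpace ℝ (Fin 2) →
          EuclideanSpace ℝ (Fin 2) × EuclideanSpace ℝ (Fin 2)) volume volume := by
      have := Measure.measurePreserving_swap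
        (μ := (volume : Measure (EuclideanSpace ℝ (Fin 2))))
        (ν := (volume : Measure (EuclideanSpace ℝ (Fin 2))))
      rwa [← Measure.volume_eq_prod] at this
    have heq := hsw.integral_comp MeasurableEquiv.prodComm.measurableEmbedding
      (fun w' : EuclideanSpace ℝ (Fin 2) × EuclideanSpace ℝ (Fin 2) =>
        (inner ℝ η (η - w'.2) : ℝ) * F ((ζ, η) - w') * ((ν ^ 4)⁻¹ * φ (ν⁻¹ • w')))
    rw [← heq]
    exact mollified_pairing_nonneg_aux
      (fun w => F (w.2, w.1)) (fun w => hF0 _)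
      (fun a b => G b a) (fun a b => hG b a)
      (fun w => φ (w.2, w.1)) ρ hρ
      (fun w => by simpa [add_comm] using hφρ (w.2, w.1))
      η ζ ν hν0
end

section
/- Let n ≥ 1, let F : ℝⁿ → ℝ be continuously differentiable, let φ ∈ L¹(ℝⁿ), and let ω₀ ∈ ℝⁿ satisfy F(ω₀) = 0 and ∇F(ω₀) ≠ 0. Set E₊ = {F > 0} and E₋ = {F < 0}, and φ_ν(ω) = ν^{−n}φ(ω/ν) for ν > 0. Then lim_{ν→0⁺} ∫_{E₊} φ_ν(ω₀ − ω) dω = ∫_{{ω : ⟨∇F(ω₀), ω⟩ < 0}} φ(ω) dω and lim_{ν→0⁺} ∫_{E₋} φ_ν(ω₀ − ω) dω = ∫_{{ω : ⟨∇F(ω₀), ω⟩ > 0}} φ(ω) dω; in particular these two limits sum to ∫_{ℝⁿ} φ. -/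
open MeasureTheory Filter Topology

private lemma mll_ker_null (n : ℕ) (L : EuclideanSpace ℝ (Fin n) →L[ℝ] ℝ) (hL : L ≠ 0) :
    volume {u : EuclideanSpace ℝ (Fin n) | L u = 0} = 0 := by
  have h : {u : EuclideanSpace ℝ (Fin n) | L u = 0}
      = (LinearMap.ker (L : EuclideanSpace ℝ (Fin n) →ₗ[ℝ] ℝ) : Set _) := by
    ext u; simp [LinearMap.mem_ker]
  rw [h]
  apply Measure.addHaar_submodule
  intro htop
  apply hL
  ext u
  have : u ∈ LinearMap.ker (L : EuclideanSpace ℝ (Fin n) →ₗ[ℝ] ℝ) := htop ▸ Submodule.mem_top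
  simpa using this

private lemma mll_change_var (n : ℕ) (F : EuclideanSpace ℝ (Fin n) → ℝ) (hFc : Continuous F)
    (φ : EuclideanSpace ℝ (Fin n) → ℝ) (ω₀ : EuclideanSpace ℝ (Fin n))
    (ν : ℝ) (hν : 0 < ν) :
    (∫ ω in {ω | 0 < F ω}, (ν ^ n)⁻¹ * φ (ν⁻¹ • (ω₀ - ω))) =
      ∫ u, Set.indicator {u | 0 < F (ω₀ - ν • u)} φ u := by
  have hs : MeasurableSet {ω : EuclideanSpace ℝ (Fin n) | 0 < F ω} :=
    (isOpen_lt continuous_const hFc).measurableSet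
  set g : EuclideanSpace ℝ (Fin n) → ℝ :=
    Set.indicator {ω | 0 < F ω} (fun ω => (ν ^ n)⁻¹ * φ (ν⁻¹ • (ω₀ - ω))) with hg
  rw [← integral_indicator hs, ← hg]
  have h1 : ∫ x, g (ω₀ - x) = ∫ x, g x := integral_sub_left_eq_self g volume ω₀
  have h2 : ∫ x, (fun u => g (ω₀ - ν • u)) (ν⁻¹ • x)
      = (ν ^ Module.finrank ℝ (EuclideanSpace ℝ (Fin n))) • ∫ u, g (ω₀ - ν • u) :=
    Measure.integral_comp_inv_smul_of_nonneg volume (fun u => g (ω₀ - ν • u)) hν.le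
  have h3 : (fun x => (fun u => g (ω₀ - ν • u)) (ν⁻¹ • x)) = fun x => g (ω₀ - x) := by
    ext x
    simp [smul_smul, mul_inv_cancel₀ hν.ne']
  rw [h3, h1, finrank_euclideanSpace_fin] at h2
  have h4 : (fun u => g (ω₀ - ν • u)) =
      fun u => (ν ^ n)⁻¹ * Set.indicator {u | 0 < F (ω₀ - ν • u)} φ u := by
    ext u
    by_cases h : 0 < F (ω₀ - ν • u) <;>
      simp [hg, Set.indicator_apply, h, Set.mem_setOf_eq, sub_sub_cancel, smul_smul,
        inv_mul_cancel₀ hν.ne']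
  rw [h4, integral_const_mul] at h2
  have hνn : (ν : ℝ) ^ n ≠ 0 := pow_ne_zero _ hν.ne'
  rw [h2]
  field_simp
  rw [smul_eq_mul, mul_div_assoc', mul_div_cancel_left₀ _ hνn]

private lemma mll_aux (n : ℕ)
    (F : EuclideanSpace ℝ (Fin n) → ℝ) (hF : ContDiff ℝ 1 F)
    (φ : EuclideanSpace ℝ (Fin n) → ℝ) (hφ : Integrable φ)
    (ω₀ : EuclideanSpace ℝ (Fin n)) (h0 : F ω₀ = 0) (hgrad : fderiv ℝ F ω₀ ≠ 0) :
    Tendsto (fun ν : ℝ => ∫ ω in {ω | 0 < F ω}, (ν ^ n)⁻¹ * φ (ν⁻¹ • (ω₀ - ω)))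
      (𝓝[>] (0 : ℝ)) (𝓝 (∫ ω in {ω | fderiv ℝ F ω₀ ω < 0}, φ ω)) := by
  set L := fderiv ℝ F ω₀ with hL
  have hLm : MeasurableSet {ω : EuclideanSpace ℝ (Fin n) | L ω < 0} :=
    (isOpen_lt L.continuous continuous_const).measurableSet
  rw [← integral_indicator hLm]
  have hFc : Continuous F := hF.continuous
  have key : Tendsto (fun ν : ℝ =>
      ∫ u, Set.indicator {u | 0 < F (ω₀ - ν • u)} φ u) (𝓝[>] (0 : ℝ))
      (𝓝 (∫ u, Set.indicator {ω | L ω < 0} φ u)) := by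
    apply tendsto_integral_filter_of_dominated_convergence (fun u => ‖φ u‖)
    · filter_upwards with ν
      exact hφ.1.indicator
        ((isOpen_lt continuous_const (hFc.comp (by fun_prop))).measurableSet)
    · filter_upwards with ν
      filter_upwards with u
      exact norm_indicator_le_norm_self φ u
    · exact hφ.norm
    · have hker : ∀ᵐ u : EuclideanSpace ℝ (Fin n), L u ≠ 0 := by
        rw [ae_iff]
        simpa using mll_ker_null n L hgrad
      filter_upwards [hker] with u hu
      have hd : HasDerivAt (fun ν : ℝ => F (ω₀ - ν • u)) (-(L u)) 0 := by
        have h1 : HasDerivAt (fun ν : ℝ => ω₀ - ν • u) (-u) 0 := by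
          simpa using (((hasDerivAt_id (0:ℝ)).smul_const u).const_sub ω₀)
        have h3 : HasFDerivAt F L (ω₀ - (0:ℝ) • u) := by
          simpa using (hF.differentiable one_ne_zero ω₀).hasFDerivAt
        have h4 := h3.comp_hasDerivAt 0 h1
        rw [map_neg] at h4
        exact h4
      have hslope : Tendsto (fun ν : ℝ => F (ω₀ - ν • u) / ν) (𝓝[>] (0 : ℝ))
          (𝓝 (-(L u))) := by
        have := hasDerivAt_iff_tendsto_slope.1 hd
        have h2 : Tendsto (slope (fun ν : ℝ => F (ω₀ - ν • u)) 0) (𝓝[>] (0 : ℝ))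
            (𝓝 (-(L u))) :=
          this.mono_left (nhdsWithin_mono 0 (fun x hx => ne_of_gt hx))
        refine h2.congr fun ν => ?_
        simp [slope_def_field, h0]
      rcases lt_or_gt_of_ne hu with hneg | hpos
      · have hev : ∀ᶠ ν in 𝓝[>] (0:ℝ), 0 < F (ω₀ - ν • u) := by
          have h1 : ∀ᶠ ν in 𝓝[>] (0:ℝ), 0 < F (ω₀ - ν • u) / ν :=
            hslope.eventually (lt_mem_nhds (by linarith))
          filter_upwards [h1, self_mem_nhdsWithin] with ν h hν
          have hν' : (0:ℝ) < ν := hν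
          rcases div_pos_iff.1 h with ⟨h1, h2⟩ | ⟨h1, h2⟩
          · exact h1
          · linarith
        have htar : Set.indicator {ω : EuclideanSpace ℝ (Fin n) | L ω < 0} φ u = φ u := by
          simp [Set.indicator_apply, hneg]
        rw [htar]
        refine Tendsto.congr' ?_ tendsto_const_nhds
        filter_upwards [hev] with ν h
        simp [Set.indicator_apply, h]
      · have hev : ∀ᶠ ν in 𝓝[>] (0:ℝ), ¬ (0 < F (ω₀ - ν • u)) := by
          have h1 : ∀ᶠ ν in 𝓝[>] (0:ℝ), F (ω₀ - ν • u) / ν < 0 :=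
            hslope.eventually (gt_mem_nhds (by linarith))
          filter_upwards [h1, self_mem_nhdsWithin] with ν h hν
          have hν' : (0:ℝ) < ν := hν
          have := (div_neg_iff).1 h
          rcases this with ⟨h1, h2⟩ | ⟨h1, h2⟩
          · linarith
          · linarith
        have htar : Set.indicator {ω : EuclideanSpace ℝ (Fin n) | L ω < 0} φ u = 0 := by
          simp [Set.indicator_apply, hpos.le.not_gt]
        rw [htar]
        refine Tendsto.congr' ?_ tendsto_const_nhds
        filter_upwards [hev] with ν h
        simp [Set.indicator_apply, h]
  refine key.congr' ?_
  filter_upwards [self_mem_nhdsWithin] with ν hν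
  exact (mll_change_var n F hFc φ ω₀ ν hν).symm

/-- If `F` is `C¹` with `F(ω₀) = 0` and `∇F(ω₀) ≠ 0`, then the mollified masses of the
sublevel / superlevel sets of `F` at `ω₀` converge to the `φ`-masses of the corresponding
half-spaces determined by `∇F(ω₀)`, and these add up to `∫ φ`. -/
theorem mollified_level_set_limits
    (n : ℕ) (hn : 1 ≤ n)
    (F : EuclideanSpace ℝ (Fin n) → ℝ) (hF : ContDiff ℝ 1 F)
    (φ : EuclideanSpace ℝ (Fin n) → ℝ) (hφ : Integrable φ)
    (ω₀ : EuclideanSpace ℝ (Fin n)) (h0 : F ω₀ = 0) (hgrad : fderiv ℝ F ω₀ ≠ 0) :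
    Tendsto (fun ν : ℝ => ∫ ω in {ω | 0 < F ω}, (ν ^ n)⁻¹ * φ (ν⁻¹ • (ω₀ - ω)))
      (𝓝[>] (0 : ℝ)) (𝓝 (∫ ω in {ω | fderiv ℝ F ω₀ ω < 0}, φ ω)) ∧
    Tendsto (fun ν : ℝ => ∫ ω in {ω | F ω < 0}, (ν ^ n)⁻¹ * φ (ν⁻¹ • (ω₀ - ω)))
      (𝓝[>] (0 : ℝ)) (𝓝 (∫ ω in {ω | 0 < fderiv ℝ F ω₀ ω}, φ ω)) ∧
    (∫ ω in {ω | fderiv ℝ F ω₀ ω < 0}, φ ω) + (∫ ω in {ω | 0 < fderiv ℝ F ω₀ ω}, φ ω) =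
      ∫ ω, φ ω := by
  set L := fderiv ℝ F ω₀ with hL
  have hdF : Differentiable ℝ F := hF.differentiable one_ne_zero
  have hfneg : fderiv ℝ (fun ω => -F ω) ω₀ = -L := by
    rw [fderiv_fun_neg]
  refine ⟨mll_aux n F hF φ hφ ω₀ h0 hgrad, ?_, ?_⟩
  · have h2 := mll_aux n (fun ω => -F ω) hF.neg φ hφ ω₀ (by simp [h0])
      (by rw [hfneg]; simpa using hgrad)
    have hs1 : {ω : EuclideanSpace ℝ (Fin n) | 0 < (fun ω => -F ω) ω} = {ω | F ω < 0} := by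
      ext ω; simp [neg_pos]
    have hs2 : {ω : EuclideanSpace ℝ (Fin n) | fderiv ℝ (fun ω => -F ω) ω₀ ω < 0}
        = {ω | 0 < L ω} := by
      ext ω; rw [hfneg]; simp [neg_lt_zero]
    rwa [hs1, hs2] at h2
  · have hmA : MeasurableSet {ω : EuclideanSpace ℝ (Fin n) | L ω < 0} :=
      (isOpen_lt L.continuous continuous_const).measurableSet
    have hmB : MeasurableSet {ω : EuclideanSpace ℝ (Fin n) | 0 < L ω} :=
      (isOpen_lt continuous_const L.continuous).measurableSet
    have hdisj : Disjoint {ω : EuclideanSpace ℝ (Fin n) | L ω < 0} {ω | 0 < L ω} := by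
      rw [Set.disjoint_left]
      intro ω h1 h2
      simp only [Set.mem_setOf_eq] at h1 h2
      exact lt_asymm h1 h2
    rw [← setIntegral_union hdisj hmB hφ.integrableOn hφ.integrableOn]
    have hfull : volume.restrict ({ω : EuclideanSpace ℝ (Fin n) | L ω < 0} ∪ {ω | 0 < L ω})
        = volume := by
      apply Measure.restrict_eq_self_of_ae_mem
      have : ∀ᵐ u : EuclideanSpace ℝ (Fin n), L u ≠ 0 := by
        rw [ae_iff]; simpa using mll_ker_null n L hgrad
      filter_upwards [this] with u hu
      rcases lt_or_gt_of_ne hu with h | h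
      · exact Or.inl h
      · exact Or.inr h
    rw [hfull]
end

section
/- Let n ≥ 1 and let F : ℝⁿ → ℝ be continuously differentiable; set E₊ = {F > 0}, E₋ = {F < 0}, E₀ = {F = 0}, and assume E₀ has Lebesgue measure zero. Let ω₀ ∈ E₀ with ∇F(ω₀) ≠ 0, let g₊, g₋ : ℝⁿ → ℝ be continuous at ω₀, and let g : ℝⁿ → ℝ be locally integrable with g = g₊ on E₊ and g = g₋ on E₋. Let φ ∈ L¹(ℝⁿ) satisfy φ ≥ 0, ∫_{ℝⁿ} φ = 1 and supp φ ⊆ closed unit ball, and set φ_ν(ω) = ν^{−n}φ(ω/ν). Define c₊ = ∫_{{ω : ⟨∇F(ω₀), ω⟩ < 0}} φ(ω) dω and c₋ = ∫_{{ω : ⟨∇F(ω₀), ω⟩ > 0}} φ(ω) dω. Then c₊ + c₋ = 1 and lim_{ν→0⁺} (g*φ_ν)(ω₀) = c₊·g₊(ω₀) + c₋·g₋(ω₀). If moreover φ is radial (φ(ω) depends only on |ω|), then c₊ = c₋ = 1/2, so the limit equals (g₊(ω₀) + g₋(ω₀))/2. -/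
open MeasureTheory Filter Topology Set

set_option maxHeartbeats 2000000 in
/-- If `g` agrees with `g₊` on `{F > 0}` and with `g₋` on `{F < 0}`, where `{F = 0}` is
Lebesgue-null, then at a point `ω₀` of the zero set with `∇F(ω₀) ≠ 0` the mollifications
`(g*φ_ν)(ω₀)` converge to `c₊ g₊(ω₀) + c₋ g₋(ω₀)` with `c₊ + c₋ = 1`; if `φ` is radial then
`c₊ = c₋ = 1/2`. -/
theorem mollified_two_sided_limit
    (n : ℕ) (hn : 1 ≤ n)
    (F : EuclideanSpace ℝ (Fin n) → ℝ) (hF : ContDiff ℝ 1 F)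
    (hE0 : volume {ω : EuclideanSpace ℝ (Fin n) | F ω = 0} = 0)
    (ω₀ : EuclideanSpace ℝ (Fin n)) (h0 : F ω₀ = 0) (hgrad : fderiv ℝ F ω₀ ≠ 0)
    (g gp gm : EuclideanSpace ℝ (Fin n) → ℝ)
    (hgp : ContinuousAt gp ω₀) (hgm : ContinuousAt gm ω₀)
    (hg : LocallyIntegrable g volume)
    (hgeqp : ∀ ω, 0 < F ω → g ω = gp ω)
    (hgeqm : ∀ ω, F ω < 0 → g ω = gm ω)
    (φ : EuclideanSpace ℝ (Fin n) → ℝ)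
    (hφint : Integrable φ) (hφ0 : ∀ ω, 0 ≤ φ ω) (hφ1 : ∫ ω, φ ω = 1)
    (hφsupp : ∀ ω : EuclideanSpace ℝ (Fin n), 1 < ‖ω‖ → φ ω = 0) :
    (∫ ω in {ω | fderiv ℝ F ω₀ ω < 0}, φ ω) + (∫ ω in {ω | 0 < fderiv ℝ F ω₀ ω}, φ ω) = 1 ∧
    Tendsto (fun ν : ℝ => ∫ ω, (ν ^ n)⁻¹ * φ (ν⁻¹ • (ω₀ - ω)) * g ω) (𝓝[>] (0 : ℝ))
      (𝓝 ((∫ ω in {ω | fderiv ℝ F ω₀ ω < 0}, φ ω) * gp ω₀ +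
        (∫ ω in {ω | 0 < fderiv ℝ F ω₀ ω}, φ ω) * gm ω₀)) ∧
    ((∃ ρ : ℝ → ℝ, ∀ ω : EuclideanSpace ℝ (Fin n), φ ω = ρ ‖ω‖) →
      (∫ ω in {ω | fderiv ℝ F ω₀ ω < 0}, φ ω) = 1 / 2 ∧
      (∫ ω in {ω | 0 < fderiv ℝ F ω₀ ω}, φ ω) = 1 / 2) := by
  classical
  set L : EuclideanSpace ℝ (Fin n) →L[ℝ] ℝ := fderiv ℝ F ω₀ with hL
  have hker : volume {ω : EuclideanSpace ℝ (Fin n) | L ω = 0} = 0 := by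
    have heq : {ω : EuclideanSpace ℝ (Fin n) | L ω = 0}
        = (LinearMap.ker (L : EuclideanSpace ℝ (Fin n) →ₗ[ℝ] ℝ) : Set _) := rfl
    rw [heq]
    apply Measure.addHaar_submodule
    intro htop
    apply hgrad
    ext x
    exact LinearMap.mem_ker.1 (htop ▸ Submodule.mem_top)
  have hmeasA : MeasurableSet {ω : EuclideanSpace ℝ (Fin n) | L ω < 0} :=
    (isOpen_lt L.continuous continuous_const).measurableSet
  have hmeasB : MeasurableSet {ω : EuclideanSpace ℝ (Fin n) | (0:ℝ) < L ω} :=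
    (isOpen_lt continuous_const L.continuous).measurableSet
  -- Part 1
  have part1 : (∫ ω in {ω | L ω < 0}, φ ω) + (∫ ω in {ω | 0 < L ω}, φ ω) = 1 := by
    have hdisj : Disjoint {ω : EuclideanSpace ℝ (Fin n) | L ω < 0} {ω | (0:ℝ) < L ω} := by
      rw [Set.disjoint_left]
      intro a ha hb
      simp only [Set.mem_setOf_eq] at ha hb
      exact absurd (ha.trans hb) (lt_irrefl _)
    have hunion : {ω : EuclideanSpace ℝ (Fin n) | L ω < 0} ∪ {ω | (0:ℝ) < L ω}
        = {ω | L ω ≠ 0} := by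
      ext ω; simp [lt_or_lt_iff_ne]
    rw [← setIntegral_union hdisj hmeasB hφint.integrableOn hφint.integrableOn, hunion,
      setIntegral_congr_set (MeasureTheory.ae_eq_univ.2 (by simpa [Set.compl_setOf] using hker)),
      Measure.restrict_univ, hφ1]
  -- Part 3
  have part3 : (∃ ρ : ℝ → ℝ, ∀ ω : EuclideanSpace ℝ (Fin n), φ ω = ρ ‖ω‖) →
      (∫ ω in {ω | L ω < 0}, φ ω) = 1 / 2 ∧ (∫ ω in {ω | 0 < L ω}, φ ω) = 1 / 2 := by
    rintro ⟨ρ, hρ⟩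
    have hφneg : ∀ ω, φ (-ω) = φ ω := fun ω => by rw [hρ, hρ, norm_neg]
    have hcc : (∫ ω in {ω | L ω < 0}, φ ω) = ∫ ω in {ω | 0 < L ω}, φ ω := by
      rw [← integral_indicator hmeasA, ← integral_indicator hmeasB,
        ← integral_neg_eq_self (Set.indicator {ω : EuclideanSpace ℝ (Fin n) | (0:ℝ) < L ω} φ)
          volume]
      congr 1
      funext ω
      simp only [Set.indicator_apply, Set.mem_setOf_eq, map_neg, neg_lt_zero, hφneg ω, neg_pos]
    constructor <;> linarith
  -- derivative setup
  have hFd : HasFDerivAt F L ω₀ := (hF.differentiable one_ne_zero ω₀).hasFDerivAt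
  have hfr : Module.finrank ℝ (EuclideanSpace ℝ (Fin n)) = n := finrank_euclideanSpace_fin
  -- change of variables
  have key : ∀ ν : ℝ, 0 < ν →
      (∫ ω, (ν ^ n)⁻¹ * φ (ν⁻¹ • (ω₀ - ω)) * g ω) = ∫ u, φ u * g (ω₀ - ν • u) := by
    intro ν hν
    set H : EuclideanSpace ℝ (Fin n) → ℝ :=
      fun x => (ν ^ n)⁻¹ * φ (ν⁻¹ • x) * g (ω₀ - x) with hH
    have h1 : (∫ ω, (ν ^ n)⁻¹ * φ (ν⁻¹ • (ω₀ - ω)) * g ω) = ∫ ω, H (ω₀ - ω) := by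
      congr 1; funext ω; simp [hH, sub_sub_cancel]
    have h2 : (∫ ω, H (ω₀ - ω)) = ∫ x, H x := integral_sub_left_eq_self H volume ω₀
    have h3 : (∫ u, H (ν • u))
        = (ν ^ Module.finrank ℝ (EuclideanSpace ℝ (Fin n)))⁻¹ • ∫ x, H x :=
      Measure.integral_comp_smul_of_nonneg volume H ν (hR := hν.le)
    have h4 : (∫ u, H (ν • u)) = (ν ^ n)⁻¹ * ∫ u, φ u * g (ω₀ - ν • u) := by
      rw [← integral_const_mul]
      congr 1; funext u
      have hs : ν⁻¹ • (ν • u) = u := by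
        rw [smul_smul, inv_mul_cancel₀ hν.ne', one_smul]
      simp only [hH, hs]; ring
    rw [h1, h2]
    rw [hfr] at h3
    have hcomb := h3.symm.trans h4
    rw [smul_eq_mul] at hcomb
    exact mul_left_cancel₀ (by positivity) hcomb
  -- quasi measure preserving
  have hQMP : ∀ ν : ℝ, 0 < ν → Measure.QuasiMeasurePreserving
      (fun u : EuclideanSpace ℝ (Fin n) => ω₀ - ν • u) volume volume := by
    intro ν hν
    have hmeas : Measurable (fun u : EuclideanSpace ℝ (Fin n) => ω₀ - ν • u) :=
      (continuous_const.sub (continuous_const_smul ν)).measurable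
    refine ⟨hmeas, ?_⟩
    have hcomp : (fun u : EuclideanSpace ℝ (Fin n) => ω₀ - ν • u)
        = (fun x : EuclideanSpace ℝ (Fin n) => ω₀ + x) ∘ (fun u => (-ν) • u) := by
      funext u; simp [sub_eq_add_neg]
    rw [hcomp, ← Measure.map_map (measurable_const_add ω₀) (measurable_const_smul _),
      Measure.map_addHaar_smul volume (neg_ne_zero.2 hν.ne'),
      Measure.map_smul, map_add_left_eq_self]
    exact Measure.smul_absolutelyContinuous
  have hmeasI : ∀ ν : ℝ, 0 < ν → AEStronglyMeasurable
      (fun u => φ u * g (ω₀ - ν • u)) volume := fun ν hν =>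
    hφint.aestronglyMeasurable.mul
      (hg.aestronglyMeasurable.comp_quasiMeasurePreserving (hQMP ν hν))
  -- bound
  set M : ℝ := max (‖gp ω₀‖ + 1) (‖gm ω₀‖ + 1) with hM
  have hM0 : 0 ≤ M := le_trans (by positivity) (le_max_left _ _)
  obtain ⟨δ, hδpos, hδ⟩ := Metric.eventually_nhds_iff.1
    ((hgp.norm.eventually_lt_const (lt_add_one ‖gp ω₀‖)).and
      (hgm.norm.eventually_lt_const (lt_add_one ‖gm ω₀‖)))
  have hbound : ∀ᶠ ν in 𝓝[>] (0:ℝ),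
      ∀ᵐ u : EuclideanSpace ℝ (Fin n), ‖φ u * g (ω₀ - ν • u)‖ ≤ M * φ u := by
    filter_upwards [Ioo_mem_nhdsGT_of_mem ⟨le_refl (0:ℝ), hδpos⟩] with ν hν
    have hae : ∀ᵐ u : EuclideanSpace ℝ (Fin n), F (ω₀ - ν • u) ≠ 0 := by
      have hp := (hQMP ν hν.1).preimage_null hE0
      rw [ae_iff]
      simpa [Set.preimage, not_not] using hp
    filter_upwards [hae] with u hu
    by_cases hu1 : ‖u‖ ≤ 1
    · have hdist : dist (ω₀ - ν • u) ω₀ < δ := by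
        rw [dist_eq_norm]
        have : ω₀ - ν • u - ω₀ = -(ν • u) := by abel
        rw [this, norm_neg, norm_smul, Real.norm_eq_abs, abs_of_pos hν.1]
        calc ν * ‖u‖ ≤ ν * 1 := by nlinarith [hν.1]
          _ < δ := by linarith [hν.2]
      have hgb : ‖g (ω₀ - ν • u)‖ ≤ M := by
        rcases lt_or_gt_of_ne hu with hneg | hpos
        · rw [hgeqm _ hneg]
          exact le_trans (hδ hdist).2.le (le_max_right _ _)
        · rw [hgeqp _ hpos]
          exact le_trans (hδ hdist).1.le (le_max_left _ _)
      calc ‖φ u * g (ω₀ - ν • u)‖ = φ u * ‖g (ω₀ - ν • u)‖ := by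
            rw [norm_mul, Real.norm_eq_abs, abs_of_nonneg (hφ0 u)]
        _ ≤ φ u * M := mul_le_mul_of_nonneg_left hgb (hφ0 u)
        _ = M * φ u := mul_comm _ _
    · have hz : φ u = 0 := hφsupp u (not_le.1 hu1)
      simp [hz]
  -- limit function
  set flim : EuclideanSpace ℝ (Fin n) → ℝ :=
    fun u => φ u * (if L u < 0 then gp ω₀ else gm ω₀) with hflim
  have hlim : ∀ᵐ u : EuclideanSpace ℝ (Fin n),
      Tendsto (fun ν : ℝ => φ u * g (ω₀ - ν • u)) (𝓝[>] (0:ℝ)) (𝓝 (flim u)) := by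
    have hker' : ∀ᵐ u : EuclideanSpace ℝ (Fin n), L u ≠ 0 := by
      have hset : {u : EuclideanSpace ℝ (Fin n) | ¬ L u ≠ 0} = {u | L u = 0} := by
        ext u; simp only [Set.mem_setOf_eq, not_not]
      rw [ae_iff, hset]; exact hker
    filter_upwards [hker'] with u hu
    have hcurve : Tendsto (fun ν : ℝ => ω₀ - ν • u) (𝓝[>] (0:ℝ)) (𝓝 ω₀) := by
      have hc : Continuous (fun ν : ℝ => ω₀ - ν • u) :=
        continuous_const.sub (continuous_id.smul continuous_const)
      have h : Tendsto (fun ν : ℝ => ω₀ - ν • u) (𝓝[>] (0:ℝ)) (𝓝 (ω₀ - (0:ℝ) • u)) :=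
        (hc.tendsto 0).mono_left nhdsWithin_le_nhds
      simpa using h
    have hcd : HasDerivAt (fun ν : ℝ => F (ω₀ - ν • u)) (-(L u)) 0 := by
      have h1 : HasDerivAt (fun ν : ℝ => ω₀ - ν • u) (-u) 0 := by
        simpa using ((hasDerivAt_id (0:ℝ)).smul_const u).const_sub ω₀
      have h2 : HasFDerivAt F L (ω₀ - (0:ℝ) • u) := by simpa using hFd
      have h3 := h2.comp_hasDerivAt 0 h1
      rw [map_neg] at h3
      exact h3
    have hslope : Tendsto (fun ν : ℝ => ν⁻¹ * F (ω₀ - ν • u)) (𝓝[>] (0:ℝ)) (𝓝 (-(L u))) := by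
      have hs := (hasDerivAt_iff_tendsto_slope.1 hcd).mono_left
        (nhdsWithin_mono 0 (fun x hx => ne_of_gt hx))
      refine hs.congr fun ν => ?_
      simp [slope_def_field, h0, div_eq_inv_mul]
    rcases lt_or_gt_of_ne hu with hneg | hpos
    · have hev : ∀ᶠ ν in 𝓝[>] (0:ℝ), 0 < F (ω₀ - ν • u) := by
        have h1 : ∀ᶠ ν in 𝓝[>] (0:ℝ), 0 < ν⁻¹ * F (ω₀ - ν • u) :=
          hslope.eventually_const_lt (by linarith)
        filter_upwards [h1, self_mem_nhdsWithin] with ν h hν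
        have hν0 : (0:ℝ) < ν := hν
        have := mul_pos hν0 h
        rwa [← mul_assoc, mul_inv_cancel₀ hν0.ne', one_mul] at this
      have htt : Tendsto (fun ν : ℝ => g (ω₀ - ν • u)) (𝓝[>] (0:ℝ)) (𝓝 (gp ω₀)) := by
        refine (hgp.tendsto.comp hcurve).congr' ?_
        filter_upwards [hev] with ν h using (hgeqp _ h).symm
      have hfe : flim u = φ u * gp ω₀ := by rw [hflim]; simp [if_pos hneg]
      rw [hfe]
      exact htt.const_mul (φ u)
    · have hev : ∀ᶠ ν in 𝓝[>] (0:ℝ), F (ω₀ - ν • u) < 0 := by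
        have h1 : ∀ᶠ ν in 𝓝[>] (0:ℝ), ν⁻¹ * F (ω₀ - ν • u) < 0 :=
          hslope.eventually_lt_const (by linarith)
        filter_upwards [h1, self_mem_nhdsWithin] with ν h hν
        have hν0 : (0:ℝ) < ν := hν
        have := mul_neg_of_pos_of_neg hν0 h
        rwa [← mul_assoc, mul_inv_cancel₀ hν0.ne', one_mul] at this
      have htt : Tendsto (fun ν : ℝ => g (ω₀ - ν • u)) (𝓝[>] (0:ℝ)) (𝓝 (gm ω₀)) := by
        refine (hgm.tendsto.comp hcurve).congr' ?_
        filter_upwards [hev] with ν h using (hgeqm _ h).symm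
      have hfe : flim u = φ u * gm ω₀ := by
        rw [hflim]; simp [if_neg (not_lt.2 hpos.le)]
      rw [hfe]
      exact htt.const_mul (φ u)
  -- value of limit
  have hcompl_ae : ({ω : EuclideanSpace ℝ (Fin n) | L ω < 0}ᶜ : Set _)
      =ᵐ[volume] {ω | (0:ℝ) < L ω} := by
    rw [MeasureTheory.ae_eq_set]
    constructor
    · refine measure_mono_null (fun ω hω => ?_) hker
      obtain ⟨h1, h2⟩ := hω
      simp only [Set.mem_compl_iff, Set.mem_setOf_eq, not_lt] at h1 h2
      exact le_antisymm h2 h1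
    · refine measure_mono_null (fun ω hω => ?_) hker
      obtain ⟨h1, h2⟩ := hω
      simp only [Set.mem_compl_iff, Set.mem_setOf_eq, not_not] at h1 h2
      exact absurd (h1.trans h2) (lt_irrefl _)
  have hVal : (∫ u, flim u)
      = (∫ ω in {ω | L ω < 0}, φ ω) * gp ω₀ + (∫ ω in {ω | 0 < L ω}, φ ω) * gm ω₀ := by
    have hsplit : flim = fun u =>
        Set.indicator {ω : EuclideanSpace ℝ (Fin n) | L ω < 0} (fun ω => φ ω * gp ω₀) u
        + Set.indicator ({ω : EuclideanSpace ℝ (Fin n) | L ω < 0}ᶜ) (fun ω => φ ω * gm ω₀) u := by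
      funext u
      by_cases h : L u < 0
      · simp [hflim, h, Set.indicator_of_mem, Set.indicator_of_notMem]
      · simp [hflim, h]
    rw [hsplit, integral_add ((hφint.mul_const _).indicator hmeasA)
        ((hφint.mul_const _).indicator hmeasA.compl),
      integral_indicator hmeasA, integral_indicator hmeasA.compl,
      setIntegral_congr_set hcompl_ae, integral_mul_const, integral_mul_const]
  have hTend : Tendsto (fun ν : ℝ => ∫ u, φ u * g (ω₀ - ν • u)) (𝓝[>] (0:ℝ))
      (𝓝 (∫ u, flim u)) := by
    apply tendsto_integral_filter_of_dominated_convergence (fun u => M * φ u)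
    · filter_upwards [self_mem_nhdsWithin] with ν hν using hmeasI ν hν
    · exact hbound
    · exact hφint.const_mul M
    · exact hlim
  refine ⟨part1, ?_, part3⟩
  rw [← hVal]
  exact hTend.congr' (by
    filter_upwards [self_mem_nhdsWithin] with ν hν using (key ν hν).symm)
end
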